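/- arXiv:1709.10270 — 11 statements merged into one kernel-verified Lean document; each statement's English description precedes it below -/
import Mathlib

section
/- Let M ∈ ℕ₀ and d ∈ ℕ, and let L ⊂ ℤ be an AAMP with bound M and difference d. If x ∈ L and y ∈ dℤ are such that min L + M ≤ x + y ≤ max L − M, then x + y ∈ L. -/
/-- `L` is an almost arithmetical multiprogression (AAMP) with difference `d` and
bound `M`: `L = y + (L' ∪ L* ∪ L'') ⊆ y + D + dℤ` for some period `D` with
`{0, d} ⊆ D ⊆ [0, d]`, where `L*` is finite nonempty with `min L* = 0` and
`L* = (D + dℤ) ∩ [0, max L*]`, `L' ⊆ [-M, -1]`, and `L'' ⊆ max L* + [1, M]`. -/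
def IsAAMP (L : Set ℤ) (d : ℕ) (M : ℕ) : Prop :=
  ∃ (D : Set ℤ) (y : ℤ) (L' Lstar L'' : Set ℤ) (m : ℤ),
    0 ∈ D ∧ (d : ℤ) ∈ D ∧ D ⊆ Set.Icc 0 (d : ℤ) ∧
    m ∈ Lstar ∧
    Lstar = {x | (∃ u ∈ D, ∃ k : ℤ, x = u + d * k) ∧ 0 ≤ x ∧ x ≤ m} ∧
    L' ⊆ Set.Icc (-(M : ℤ)) (-1) ∧
    L'' ⊆ Set.Icc (m + 1) (m + M) ∧
    (∀ x ∈ L' ∪ Lstar ∪ L'', ∃ u ∈ D, ∃ k : ℤ, x = u + d * k) ∧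
    L = (fun x => y + x) '' (L' ∪ Lstar ∪ L'')

/-- If `L` is an AAMP with difference `d` and bound `M`, `x ∈ L` and `y ∈ dℤ` are such
that `min L + M ≤ x + y ≤ max L - M`, then `x + y ∈ L`. -/
theorem aamp_mem_of_dvd_translate (M d : ℕ) (hd : 1 ≤ d) (L : Set ℤ)
    (hL : IsAAMP L d M) (x y : ℤ) (hx : x ∈ L) (hy : (d : ℤ) ∣ y)
    (lmin lmax : ℤ) (hmin : IsLeast L lmin) (hmax : IsGreatest L lmax)
    (h1 : lmin + M ≤ x + y) (h2 : x + y ≤ lmax - M) : x + y ∈ L := by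
  obtain ⟨D, y0, L', Lstar, L'', m, hD0, hDd, hDsub, hmStar, hLstar, hL's, hL''s, hlat, hLeq⟩ := hL
  have hm0 : 0 ≤ m := by
    rw [hLstar] at hmStar; exact hmStar.2.1
  have hSlb : ∀ s ∈ L' ∪ Lstar ∪ L'', -(M : ℤ) ≤ s := by
    rintro s ((h | h) | h)
    · exact (hL's h).1
    · rw [hLstar] at h
      linarith [h.2.1]
    · have := (hL''s h).1
      linarith
  have hSub : ∀ s ∈ L' ∪ Lstar ∪ L'', s ≤ m + M := by
    rintro s ((h | h) | h)
    · have := (hL's h).2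
      have : (0:ℤ) ≤ M := Int.natCast_nonneg M
      linarith [(hL's h).2]
    · rw [hLstar] at h
      have : (0:ℤ) ≤ M := Int.natCast_nonneg M
      linarith [h.2.2]
    · exact (hL''s h).2
  -- bounds on lmin, lmax relative to y0
  obtain ⟨s1, hs1, hs1e⟩ := hLeq ▸ hmin.1
  obtain ⟨s2, hs2, hs2e⟩ := hLeq ▸ hmax.1
  have hlmin : y0 - M ≤ lmin := by
    have := hSlb s1 hs1; simp only at hs1e; linarith
  have hlmax : lmax ≤ y0 + m + M := by
    have := hSub s2 hs2; simp only at hs2e; linarith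
  -- decompose x
  obtain ⟨s, hs, hse⟩ := hLeq ▸ hx
  simp only at hse
  obtain ⟨u, hu, k, hk⟩ := hlat s hs
  obtain ⟨t, rfl⟩ := hy
  -- the target element
  have hmem : s + (d : ℤ) * t ∈ Lstar := by
    rw [hLstar]
    refine ⟨⟨u, hu, k + t, by rw [hk]; ring⟩, by linarith, by linarith⟩
  rw [hLeq]
  exact ⟨s + (d : ℤ) * t, Or.inl (Or.inr hmem), show y0 + (s + (d:ℤ) * t) = x + (d:ℤ) * t by linarith⟩
end

section
/- Let H be an atomic commutative unit-cancellative monoid with finite set of distances Δ(H). Then the adjacent catenary degree satisfies c_adj(H) ≤ δ_w(H)·max Δ(H). In particular, if δ_w(H) < ∞ and the equal catenary degree c_eq(H) < ∞, then the monotone catenary degree c_mon(H) < ∞. -/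
/-- `s` is a factorization of `a`: a multiset of atoms of the reduced monoid
`H_red = Associates H` whose product is the class of `a`. -/
def IsFactorizationOf {H : Type*} [CommMonoid H]
    (s : Multiset (Associates H)) (a : H) : Prop :=
  (∀ x ∈ s, Irreducible x) ∧ s.prod = Associates.mk a

/-- The set of lengths `L(a)` of `a`. -/
def Lengths {H : Type*} [CommMonoid H] (a : H) : Set ℕ :=
  {n | ∃ s : Multiset (Associates H), IsFactorizationOf s a ∧ s.card = n}

/-- The distance between two factorizations:
`d(z,z') = max {|z ⬝ gcd(z,z')⁻¹|, |z' ⬝ gcd(z,z')⁻¹|}`. -/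
def factorizationDist {H : Type*} [CommMonoid H] [DecidableEq (Associates H)]
    (s t : Multiset (Associates H)) : ℕ :=
  max (s - t).card (t - s).card

/-- `k` and `l` are adjacent lengths of `a`:
`L(a) ∩ [min {k,l}, max {k,l}] = {k, l}` with `k ≠ l`. -/
def AdjacentLengths {H : Type*} [CommMonoid H] (a : H) (k l : ℕ) : Prop :=
  k ≠ l ∧ k ∈ Lengths a ∧ l ∈ Lengths a ∧
    ∀ m ∈ Lengths a, min k l ≤ m → m ≤ max k l → m = k ∨ m = l

/-- `z` and `z'` can be concatenated by a monotone `N`-chain of factorizations of `a`. -/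
def MonotoneNChain {H : Type*} [CommMonoid H] [DecidableEq (Associates H)]
    (a : H) (N : ℕ) (z z' : Multiset (Associates H)) : Prop :=
  ∃ (n : ℕ) (c : ℕ → Multiset (Associates H)), c 0 = z ∧ c n = z' ∧
    (∀ i ≤ n, IsFactorizationOf (c i) a) ∧
    (∀ i < n, factorizationDist (c i) (c (i + 1)) ≤ N) ∧
    ((∀ i j, i ≤ j → j ≤ n → (c i).card ≤ (c j).card) ∨
     (∀ i j, i ≤ j → j ≤ n → (c j).card ≤ (c i).card))

section Aux
variable {H : Type*} [CommMonoid H] [DecidableEq (Associates H)]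

def IncChain (a : H) (N : ℕ) (z z' : Multiset (Associates H)) : Prop :=
  ∃ (n : ℕ) (c : ℕ → Multiset (Associates H)), c 0 = z ∧ c n = z' ∧
    (∀ i ≤ n, IsFactorizationOf (c i) a) ∧
    (∀ i < n, factorizationDist (c i) (c (i + 1)) ≤ N) ∧
    (∀ i j, i ≤ j → j ≤ n → (c i).card ≤ (c j).card)

lemma factorizationDist_comm (s t : Multiset (Associates H)) :
    factorizationDist s t = factorizationDist t s := max_comm _ _

lemma IncChain.weaken {a : H} {N N' : ℕ} {z z'} (h : IncChain a N z z') (hN : N ≤ N') :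
    IncChain a N' z z' := by
  obtain ⟨n, c, h0, hn, hf, hd, hm⟩ := h
  exact ⟨n, c, h0, hn, hf, fun i hi => (hd i hi).trans hN, hm⟩

lemma IncChain.toMonotone {a : H} {N : ℕ} {z z'} (h : IncChain a N z z') :
    MonotoneNChain a N z z' := by
  obtain ⟨n, c, h0, hn, hf, hd, hm⟩ := h
  exact ⟨n, c, h0, hn, hf, hd, Or.inl hm⟩

lemma IncChain.rev {a : H} {N : ℕ} {z z'} (h : IncChain a N z z') :
    MonotoneNChain a N z' z := by
  obtain ⟨n, c, h0, hn, hf, hd, hm⟩ := h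
  refine ⟨n, fun i => c (n - i), by simp [hn], by simp [h0], fun i hi => hf _ (Nat.sub_le _ _),
    fun i hi => ?_, Or.inr fun i j hij hj => hm _ _ (Nat.sub_le_sub_left hij n) (Nat.sub_le _ _)⟩
  have h1 : n - (i + 1) < n := by omega
  have h2 : n - (i + 1) + 1 = n - i := by omega
  have := hd (n - (i + 1)) h1
  rw [h2] at this
  simpa [factorizationDist_comm] using this

lemma IncChain.trans {a : H} {N : ℕ} {z w z'} (h1 : IncChain a N z w)
    (h2 : IncChain a N w z') : IncChain a N z z' := by
  obtain ⟨n1, c1, h10, h1n, h1f, h1d, h1m⟩ := h1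
  obtain ⟨n2, c2, h20, h2n, h2f, h2d, h2m⟩ := h2
  refine ⟨n1 + n2, fun i => if i ≤ n1 then c1 i else c2 (i - n1), ?_, ?_, ?_, ?_, ?_⟩
  · simp [h10]
  · by_cases h : n2 = 0
    · subst h; simp [h1n, h20.symm.trans h2n]
    · have : ¬ n1 + n2 ≤ n1 := by omega
      simp [this, h2n]
  · intro i hi
    by_cases h : i ≤ n1
    · simpa [h] using h1f i h
    · simp only [h, if_false]
      exact h2f _ (by omega)
  · intro i hi
    by_cases h : i + 1 ≤ n1
    · have h' : i ≤ n1 := by omega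
      simpa [h, h'] using h1d i (by omega)
    · by_cases h' : i ≤ n1
      · have hi1 : i = n1 := by omega
        subst hi1
        simp only [le_refl, if_true, h, if_false]
        have : i + 1 - i = 1 := by omega
        rw [this, h1n, ← h20]
        have := h2d 0 (by omega)
        simpa using this
      · simp only [h, h', if_false]
        have : i + 1 - n1 = (i - n1) + 1 := by omega
        rw [this]
        exact h2d (i - n1) (by omega)
  · intro i j hij hj
    by_cases hji : j ≤ n1
    · have : i ≤ n1 := le_trans hij hji
      simpa [this, hji] using h1m i j hij hji
    · by_cases hin : i ≤ n1
      · simp only [hin, if_true, hji, if_false]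
        calc (c1 i).card ≤ (c1 n1).card := h1m i n1 hin le_rfl
          _ = (c2 0).card := by rw [h1n, h20]
          _ ≤ (c2 (j - n1)).card := h2m 0 (j - n1) (Nat.zero_le _) (by omega)
      · simp only [hin, if_false, hji, if_false]
        exact h2m (i - n1) (j - n1) (by omega) (by omega)

lemma IncChain.single {a : H} {N : ℕ} {x y : Multiset (Associates H)}
    (hx : IsFactorizationOf x a) (hy : IsFactorizationOf y a)
    (hc : x.card ≤ y.card) (hd : factorizationDist x y ≤ N) : IncChain a N x y := by
  refine ⟨1, fun i => if i = 0 then x else y, by simp, by simp, ?_, ?_, ?_⟩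
  · intro i _; by_cases h : i = 0 <;> simp [h, hx, hy]
  · intro i hi
    interval_cases i
    simpa using hd
  · intro i j hij hj
    by_cases h : i = 0 <;> by_cases h' : j = 0 <;> simp [h, h'] <;> omega

end Aux

lemma eqChain {H : Type*} [CommMonoid H] [DecidableEq (Associates H)]
    {a : H} {N : ℕ} {z z' : Multiset (Associates H)}
    (hcard : z.card = z'.card) (h : MonotoneNChain a N z z') : IncChain a N z z' := by
  obtain ⟨n, c, h0, hn, hf, hd, hm | hm⟩ := h
  · exact ⟨n, c, h0, hn, hf, hd, hm⟩
  · refine ⟨n, c, h0, hn, hf, hd, fun i j hij hj => ?_⟩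
    have e0 : (c 0).card = (c n).card := by rw [h0, hn, hcard]
    have h1 := hm 0 i (Nat.zero_le _) (le_trans hij hj)
    have h2 := hm i j hij hj
    have h3 := hm j n hj le_rfl
    omega

lemma key {H : Type*} [CommMonoid H] [DecidableEq (Associates H)]
    (D Nw Ne : ℕ)
    (hD : ∀ (a : H) (k l : ℕ), AdjacentLengths a k l → ((l : ℤ) - k).natAbs ≤ D)
    (hw : ∀ (a : H) (k l : ℕ), k ∈ Lengths a → l ∈ Lengths a →
      ∃ x y : Multiset (Associates H), IsFactorizationOf x a ∧ IsFactorizationOf y a ∧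
        x.card = k ∧ y.card = l ∧
        factorizationDist x y ≤ Nw * ((l : ℤ) - (k : ℤ)).natAbs)
    (hNe : ∀ (a : H) (z z' : Multiset (Associates H)), IsFactorizationOf z a →
        IsFactorizationOf z' a → z.card = z'.card → MonotoneNChain a Ne z z') :
    ∀ (d : ℕ) (a : H) (z z' : Multiset (Associates H)), IsFactorizationOf z a →
      IsFactorizationOf z' a → z.card ≤ z'.card → z'.card - z.card = d →
      IncChain a (max Ne (Nw * D)) z z' := by
  intro d
  induction d using Nat.strong_induction_on with
  | _ d IH =>
  intro a z z' hz hz' hle hd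
  classical
  rcases Nat.eq_or_lt_of_le hle with heq | hlt
  · exact (eqChain heq (hNe a z z' hz hz' heq)).weaken (le_max_left _ _)
  · set k := z.card with hk
    set l := z'.card with hl
    have hex : ∃ m, m ∈ Lengths a ∧ k < m ∧ m ≤ l := ⟨l, ⟨z', hz', rfl⟩, hlt, le_rfl⟩
    set k' := Nat.find hex with hk'
    obtain ⟨hk'L, hkk', hk'l⟩ := Nat.find_spec hex
    have hkL : k ∈ Lengths a := ⟨z, hz, rfl⟩
    have hadj : AdjacentLengths a k k' := by
      refine ⟨Nat.ne_of_lt hkk', hkL, hk'L, fun m hm h1 h2 => ?_⟩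
      rw [min_eq_left hkk'.le] at h1
      rw [max_eq_right hkk'.le] at h2
      rcases Nat.eq_or_lt_of_le h1 with h | h
      · exact Or.inl h.symm
      · exact Or.inr (le_antisymm (Nat.find_min' hex ⟨hm, h, le_trans h2 hk'l⟩) h2).symm
    obtain ⟨x, y, hx, hy, hxc, hyc, hxyd⟩ := hw a k k' hkL hk'L
    have hdist : factorizationDist x y ≤ max Ne (Nw * D) :=
      le_trans (hxyd.trans (Nat.mul_le_mul_left Nw (hD a k k' hadj))) (le_max_right _ _)
    have c1 : IncChain a (max Ne (Nw * D)) z x :=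
      (eqChain (by omega) (hNe a z x hz hx (by omega))).weaken (le_max_left _ _)
    have c2 : IncChain a (max Ne (Nw * D)) x y :=
      IncChain.single hx hy (by omega) hdist
    have c3 : IncChain a (max Ne (Nw * D)) y z' :=
      IH (l - k') (by omega) a y z' hy hz' (by omega) (by omega)
    exact (c1.trans c2).trans c3


/-- Let `H` be an atomic commutative unit-cancellative monoid whose set of distances
`Δ(H)` is bounded by `D` and whose weak successive distance is bounded by `Nw`.
Then the adjacent catenary degree satisfies `c_adj(H) ≤ δ_w(H)·max Δ(H)`:
for adjacent lengths `k, l` of `a`, `d(Z_k(a), Z_l(a)) ≤ Nw·D`. In particular,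
if moreover the equal catenary degree is finite, then the monotone catenary degree
`c_mon(H)` is finite. -/
theorem adjacentCatenaryDegree_le_and_monotone_finite {H : Type*} [CommMonoid H]
    [DecidableEq (Associates H)]
    (hUC : ∀ a u : H, a * u = a → IsUnit u)
    (hAtomic : ∀ a : H, ¬ IsUnit a →
      ∃ s : Multiset (Associates H), IsFactorizationOf s a)
    (D : ℕ) (hD : ∀ (a : H) (k l : ℕ), AdjacentLengths a k l → ((l : ℤ) - k).natAbs ≤ D)
    (Nw : ℕ)
    (hw : ∀ (a : H) (k l : ℕ), k ∈ Lengths a → l ∈ Lengths a →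
      ∃ x y : Multiset (Associates H), IsFactorizationOf x a ∧ IsFactorizationOf y a ∧
        x.card = k ∧ y.card = l ∧
        factorizationDist x y ≤ Nw * ((l : ℤ) - (k : ℤ)).natAbs) :
    (∀ (a : H) (k l : ℕ), AdjacentLengths a k l →
      ∃ x y : Multiset (Associates H), IsFactorizationOf x a ∧ IsFactorizationOf y a ∧
        x.card = k ∧ y.card = l ∧ factorizationDist x y ≤ Nw * D) ∧
    (∀ Ne : ℕ,
      (∀ (a : H) (z z' : Multiset (Associates H)), IsFactorizationOf z a →
        IsFactorizationOf z' a → z.card = z'.card → MonotoneNChain a Ne z z') →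
      ∃ Nm : ℕ, ∀ (a : H) (z z' : Multiset (Associates H)), IsFactorizationOf z a →
        IsFactorizationOf z' a → MonotoneNChain a Nm z z') := by
  constructor
  · intro a k l hadj
    obtain ⟨x, y, hx, hy, hxc, hyc, hxyd⟩ := hw a k l hadj.2.1 hadj.2.2.1
    exact ⟨x, y, hx, hy, hxc, hyc,
      hxyd.trans (Nat.mul_le_mul_left Nw (hD a k l hadj))⟩
  · intro Ne hNe
    refine ⟨max Ne (Nw * D), fun a z z' hz hz' => ?_⟩
    rcases le_total z.card z'.card with h | h
    · exact (key D Nw Ne hD hw hNe _ a z z' hz hz' h rfl).toMonotone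
    · exact (key D Nw Ne hD hw hNe _ a z' z hz' hz h rfl).rev
end

section
/- Let H be an atomic commutative monoid whose associated reduced monoid is finitely generated. Then the (strong) successive distance δ(H) is finite. -/
/-!
If no bound existed, we could pick, for every `N`, a factorization `z_N` of some `a_N`, a length
`k_N` adjacent to `|z_N|` and a factorization `Y_N` of `a_N` of length `k_N`, such that every
factorization of `a_N` of length `k_N` is farther than `N` from `z_N`. All atoms of `H_red` lie in
the finite generating set, so by Dickson's lemma there are `m < n`, with `n` as large as we like
compared to `d(z_m, Y_m)`, such that `z_m ≤ z_n` and the gap `k_m - |z_m|` has the sign of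
`k_n - |z_n|` and at most its size. Then `Y_m + (z_n - z_m)` factors `a_n`, its length lies
between `|z_n|` and `k_n` and differs from `|z_n|`, so it is `k_n` by adjacency, and its distance
to `z_n` is `d(z_m, Y_m)`.
-/

lemma Multiset.le_of_count_le_of_forall_mem {α : Type*} [DecidableEq α] {S : Finset α}
    {z w : Multiset α} (hz : ∀ x ∈ z, x ∈ S) (h : ∀ s : S, z.count (s : α) ≤ w.count (s : α)) :
    z ≤ w := by
  rw [Multiset.le_iff_count]
  intro x
  by_cases hx : x ∈ S
  · exact h ⟨x, hx⟩
  · rw [Multiset.count_eq_zero_of_notMem fun hxz => hx (hz x hxz)]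
    exact Nat.zero_le _

section Factorizations

variable {H : Type*} [CommMonoid H] [DecidableEq (Associates H)]

lemma factorizationDist_add_right (z y u : Multiset (Associates H)) :
    factorizationDist (z + u) (y + u) = factorizationDist z y := by
  simp only [factorizationDist, add_tsub_add_eq_tsub_right]

lemma IsFactorizationOf.add_tsub {z y z' : Multiset (Associates H)} {a a' : H}
    (hz : IsFactorizationOf z a) (hy : IsFactorizationOf y a)
    (hz' : IsFactorizationOf z' a') (hle : z ≤ z') : IsFactorizationOf (y + (z' - z)) a' := by
  refine ⟨fun x hx => ?_, ?_⟩
  · rcases Multiset.mem_add.mp hx with hx | hx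
    · exact hy.1 x hx
    · exact hz'.1 x (Multiset.mem_of_le tsub_le_self hx)
  · rw [Multiset.prod_add, hy.2, ← hz.2, ← Multiset.prod_add, add_tsub_cancel_of_le hle, hz'.2]

/-- With truncated subtraction, `hup` and `hdown` say that `|y| - |z|` has the sign of
`k - |z'|` and at most its absolute value. -/
theorem exists_factorization_card_eq_of_le
    {z y z' : Multiset (Associates H)} {a a' : H} {k : ℕ}
    (hz : IsFactorizationOf z a) (hy : IsFactorizationOf y a) (hyz : y.card ≠ z.card)
    (hz' : IsFactorizationOf z' a') (hadj : AdjacentLengths a' k z'.card) (hle : z ≤ z')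
    (hup : y.card - z.card ≤ k - z'.card) (hdown : z.card - y.card ≤ z'.card - k) :
    ∃ y', IsFactorizationOf y' a' ∧ y'.card = k ∧
      factorizationDist z' y' = factorizationDist z y := by
  have hfact := hz.add_tsub hy hz' hle
  refine ⟨y + (z' - z), hfact, ?_, ?_⟩
  · have hcard : (y + (z' - z)).card + z.card = y.card + z'.card := by
      rw [Multiset.card_add, Multiset.card_sub hle]
      have := Multiset.card_le_card hle
      omega
    refine (hadj.2.2.2 _ ⟨_, hfact, rfl⟩ ?_ ?_).resolve_right ?_ <;> omega
  · nth_rewrite 1 [← add_tsub_cancel_of_le hle]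
    exact factorizationDist_add_right z y (z' - z)

end Factorizations

theorem successiveDistance_finite_of_finitelyGenerated_general {H : Type*} [CommMonoid H]
    [DecidableEq (Associates H)]
    (hfg : ∃ S : Finset (Associates H),
      Submonoid.closure (S : Set (Associates H)) = ⊤) :
    ∃ N : ℕ, ∀ (a : H) (z : Multiset (Associates H)), IsFactorizationOf z a →
      ∀ k : ℕ, AdjacentLengths a k z.card →
        ∃ y : Multiset (Associates H), IsFactorizationOf y a ∧ y.card = k ∧
          factorizationDist z y ≤ N := by
  obtain ⟨S, hS⟩ := hfg
  have hatom (x : Associates H) (hx : Irreducible x) : x ∈ S :=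
    irreducible_subset_of_submonoidClosure_eq_top hS hx
  by_contra! hfar
  choose a z hz k hadj hfar using hfar
  choose Y hY hYk using fun N => (hadj N).2.1
  let profile (N : ℕ) : (S → ℕ) × ℕ × ℕ :=
    (fun s => (z N).count (s : Associates H), k N - (z N).card, (z N).card - k N)
  obtain ⟨g, hg⟩ := wellQuasiOrdered_le.exists_monotone_subseq profile
  set n := factorizationDist (z (g 0)) (Y (g 0))
  obtain ⟨hcount, hup, hdown⟩ := hg 0 n (Nat.zero_le n)
  have hle : z (g 0) ≤ z (g n) :=
    Multiset.le_of_count_le_of_forall_mem (fun x hx => hatom x ((hz _).1 x hx)) hcount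
  obtain ⟨y, hy, hyk, hdist⟩ := exists_factorization_card_eq_of_le (hz (g 0)) (hY (g 0))
    (by rw [hYk]; exact (hadj _).1) (hz (g n)) (hadj _) hle (by rwa [hYk]) (by rwa [hYk])
  exact (hdist ▸ hfar (g n) y hy hyk).not_ge (g.strictMono.id_le n)

/-- If `H` is an atomic commutative unit-cancellative monoid whose associated reduced
monoid `H_red = Associates H` is finitely generated, then the (strong) successive
distance `δ(H)` is finite: there is `N` such that every factorization `z` of an element
can reach each length adjacent to `|z|` within distance `N`. -/
theorem successiveDistance_finite_of_finitelyGenerated {H : Type*} [CommMonoid H]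
    [DecidableEq (Associates H)]
    (hUC : ∀ a u : H, a * u = a → IsUnit u)
    (hAtomic : ∀ a : H, ¬ IsUnit a →
      ∃ s : Multiset (Associates H), IsFactorizationOf s a)
    (hfg : ∃ S : Finset (Associates H),
      Submonoid.closure (S : Set (Associates H)) = ⊤) :
    ∃ N : ℕ, ∀ (a : H) (z : Multiset (Associates H)), IsFactorizationOf z a →
      ∀ k : ℕ, AdjacentLengths a k z.card →
        ∃ y : Multiset (Associates H), IsFactorizationOf y a ∧ y.card = k ∧
          factorizationDist z y ≤ N :=
  successiveDistance_finite_of_finitelyGenerated_general hfg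
end

section
/- Let H be a commutative monoid whose associated reduced monoid is finitely generated. Then the monotone catenary degree c_mon(H) is finite. -/
/-! The atoms of `H_red` lie in every generating set, so there are finitely many of them and the
factorizations are the elements of a free commutative monoid `Multiset P` with `P` finite; two of
them factorize the same element iff they are congruent modulo the kernel of the evaluation map.
Rédei's theorem (Hilbert's basis theorem in `ℚ[Multiset P]`) generates the equal-length part of
that congruence by finitely many pairs, which links factorizations of equal length by chains of
bounded steps. Dickson's lemma shows that between adjacent lengths one can cross with a single
bounded step. Induction on the difference of lengths then yields monotone chains of bounded steps.
-/

open Relation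

theorem Relation.ReflTransGen.exists_seq_of_refl {α : Type*} {r : α → α → Prop}
    (hr : ∀ x, r x x) {a b : α} (h : ReflTransGen r a b) :
    ∃ (n : ℕ) (c : ℕ → α), c 0 = a ∧ c n = b ∧ ∀ i, r (c i) (c (i + 1)) := by
  induction h using Relation.ReflTransGen.head_induction_on with
  | refl => exact ⟨0, fun _ => b, rfl, rfl, fun _ => hr b⟩
  | @head a x hax _ ih =>
    obtain ⟨n, c, rfl, hcn, hc⟩ := ih
    exact ⟨n + 1, fun | 0 => a | k + 1 => c k, rfl, hcn, fun | 0 => hax | k + 1 => hc k⟩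

namespace Multiset

variable {α β : Type*} [DecidableEq α]

theorem map_sub_of_injective [DecidableEq β] {f : α → β} (hf : Function.Injective f)
    (s t : Multiset α) : (s - t).map f = s.map f - t.map f :=
  Quotient.inductionOn₂ s t fun _ _ => congr_arg ofList (List.map_diff hf)

def subDist (s t : Multiset α) : ℕ :=
  max (s - t).card (t - s).card

theorem subDist_self (s : Multiset α) : subDist s s = 0 := by
  simp [subDist]

theorem subDist_add_right (s t u : Multiset α) : subDist (s + u) (t + u) = subDist s t := by
  simp only [subDist, add_tsub_add_eq_tsub_right]

theorem subDist_le_max_card (s t : Multiset α) : subDist s t ≤ max s.card t.card :=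
  max_le_max (card_le_card (Multiset.sub_le_self s t)) (card_le_card (Multiset.sub_le_self t s))

theorem subDist_map [DecidableEq β] {f : α → β} (hf : Function.Injective f)
    (s t : Multiset α) : subDist (s.map f) (t.map f) = subDist s t := by
  simp only [subDist, ← map_sub_of_injective hf, card_map]

end Multiset

section Rewriting

variable {M : Type*} [AddCommMonoid M]

def RewriteStep (R : Set (M × M)) (u v : M) : Prop :=
  ∃ p q w, ((p, q) ∈ R ∨ (q, p) ∈ R) ∧ u = p + w ∧ v = q + w

theorem RewriteStep.symm {R : Set (M × M)} {u v : M} (h : RewriteStep R u v) :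
    RewriteStep R v u := by
  obtain ⟨p, q, w, hpq, rfl, rfl⟩ := h
  exact ⟨q, p, w, hpq.symm, rfl, rfl⟩

theorem RewriteStep.add_right {R : Set (M × M)} {u v : M} (h : RewriteStep R u v) (x : M) :
    RewriteStep R (u + x) (v + x) := by
  obtain ⟨p, q, w, hpq, rfl, rfl⟩ := h
  exact ⟨p, q, w + x, hpq, add_assoc _ _ _, add_assoc _ _ _⟩

def rewriteCon (R : Set (M × M)) : AddCon M where
  r := ReflTransGen (RewriteStep R)
  iseqv.refl _ := .refl
  iseqv.symm h := by
    induction h with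
    | refl => exact .refl
    | tail _ hs ih => exact ih.head hs.symm
  iseqv.trans := .trans
  add' {w x y z} h₁ h₂ := by
    refine (h₁.lift (· + y) fun _ _ h => h.add_right y).trans ?_
    simpa only [add_comm x] using h₂.lift (· + x) fun _ _ h => h.add_right x

theorem rewriteCon_of_mem {R : Set (M × M)} {p q : M} (h : (p, q) ∈ R) : rewriteCon R p q :=
  .single ⟨p, q, 0, .inl h, (add_zero p).symm, (add_zero q).symm⟩

end Rewriting

/-- Rédei's theorem in rewriting form. The binomials `X^u - X^v` with `σ u v` span a finitely
generated ideal of the Noetherian ring `ℚ[Multiset P]`; `R` indexes finitely many generators, and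
`ℚ[Multiset P] → ℚ[Multiset P ⧸ rewriteCon R]` kills them, hence kills `X^u - X^v` for all
`σ u v`. -/
theorem Multiset.exists_finset_reflTransGen_rewriteStep {P : Type*} [Finite P] [DecidableEq P]
    (σ : Multiset P → Multiset P → Prop) :
    ∃ R : Finset (Multiset P × Multiset P), (∀ pq ∈ R, σ pq.1 pq.2) ∧
      ∀ u v, σ u v → ReflTransGen (RewriteStep (R : Set (Multiset P × Multiset P))) u v := by
  have : IsNoetherianRing (AddMonoidAlgebra ℚ (Multiset P)) :=
    isNoetherianRing_of_ringEquiv (MvPolynomial P ℚ)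
      (AddMonoidAlgebra.domCongr ℚ ℚ Multiset.toFinsupp.symm).toRingEquiv
  let binomial (pq : Multiset P × Multiset P) : AddMonoidAlgebra ℚ (Multiset P) :=
    .single pq.1 1 - .single pq.2 1
  obtain ⟨T, hTσ, hspan⟩ := (Submodule.fg_span_iff_fg_span_finset_subset
    (binomial '' {pq | σ pq.1 pq.2})).mp (IsNoetherian.noetherian (Ideal.span _))
  obtain ⟨R, hRσ, rfl⟩ := Finset.subset_set_image_iff.mp hTσ
  refine ⟨R, hRσ, fun u v huv => ?_⟩
  let c := rewriteCon (R : Set (Multiset P × Multiset P))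
  let φ := AddMonoidAlgebra.mapDomainRingHom ℚ c.mk'
  have hφ (pq : Multiset P × Multiset P) : φ (binomial pq) = 0 ↔ c pq.1 pq.2 := by
    rw [map_sub, sub_eq_zero, ← AddCon.eq]
    simp only [φ, AddMonoidAlgebra.mapDomainRingHom_apply, AddMonoidAlgebra.mapDomain_single]
    exact AddMonoidAlgebra.single_left_inj one_ne_zero
  have hker : Ideal.span (binomial '' {pq | σ pq.1 pq.2}) ≤ RingHom.ker φ := by
    change Submodule.span _ _ ≤ _
    rw [hspan, Submodule.span_le, Finset.coe_image]
    rintro _ ⟨pq, hpq, rfl⟩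
    exact (hφ pq).mpr (rewriteCon_of_mem hpq)
  exact (hφ (u, v)).mp (hker (Ideal.subset_span ⟨(u, v), huv, rfl⟩))

section MonotoneChains

variable {P : Type*} [DecidableEq P]

def MonotoneStep (c : AddCon (Multiset P)) (N : ℕ) (u v : Multiset P) : Prop :=
  c u v ∧ u.subDist v ≤ N ∧ u.card ≤ v.card

theorem MonotoneStep.refl (c : AddCon (Multiset P)) (N : ℕ) (u : Multiset P) :
    MonotoneStep c N u u :=
  ⟨c.refl u, (Multiset.subDist_self u).trans_le (Nat.zero_le N), le_rfl⟩

theorem MonotoneStep.mono {c : AddCon (Multiset P)} {N N' : ℕ} (hN : N ≤ N') {u v : Multiset P}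
    (h : MonotoneStep c N u v) : MonotoneStep c N' u v :=
  ⟨h.1, h.2.1.trans hN, h.2.2⟩

variable [Finite P] (c : AddCon (Multiset P))

theorem AddCon.exists_reflTransGen_monotoneStep_of_card_eq :
    ∃ N, ∀ s t, c s t → s.card = t.card → ReflTransGen (MonotoneStep c N) s t := by
  obtain ⟨R, hRσ, hR⟩ :=
    Multiset.exists_finset_reflTransGen_rewriteStep fun s t => c s t ∧ s.card = t.card
  set N := R.sup fun pq => max pq.1.card pq.2.card
  have hRN (pq) (h : pq ∈ R) : max pq.1.card pq.2.card ≤ N :=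
    Finset.le_sup (f := fun pq => max pq.1.card pq.2.card) h
  refine ⟨N, fun s t hst hcard => ReflTransGen.mono ?_ _ _ (hR s t ⟨hst, hcard⟩)⟩
  rintro _ _ ⟨p, q, w, hpq, rfl, rfl⟩
  obtain ⟨hcpq, hcard, hN⟩ : c p q ∧ p.card = q.card ∧ max p.card q.card ≤ N := by
    rcases hpq with h | h
    · exact ⟨(hRσ _ h).1, (hRσ _ h).2, hRN _ h⟩
    · exact ⟨c.symm (hRσ _ h).1, (hRσ _ h).2.symm, max_comm q.card p.card ▸ hRN _ h⟩
  refine ⟨c.add hcpq (c.refl w), ?_, by simp [hcard]⟩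
  rw [Multiset.subDist_add_right]
  exact (Multiset.subDist_le_max_card p q).trans hN

theorem AddCon.exists_monotoneStep_of_no_card_between :
    ∃ N, ∀ s t, c s t → s.card < t.card →
      (∀ w, c s w → s.card < w.card → t.card ≤ w.card) →
      ∃ u v, c s u ∧ u.card = s.card ∧ v.card = t.card ∧ MonotoneStep c N u v := by
  -- Were no bound to work, Dickson's lemma would give `i < j` with `s i ≤ s j` and a larger gap
  -- at `j`. Trading `s i` for `t i` inside `s j` reaches length `(t j).card` (no length lies in
  -- between) at distance at most `max (s i).card (t i).card < j`.
  by_contra! hbad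
  choose s t hst hlt hadj hfar using hbad
  have : WellQuasiOrderedLE (Multiset P) :=
    (Finsupp.orderIsoMultiset (ι := P)).wellQuasiOrderedLE_iff.mp inferInstance
  obtain ⟨g, hg⟩ :=
    wellQuasiOrdered_le.exists_monotone_subseq fun n => ((t n).card - (s n).card, s n)
  set i := g 0
  set j := g (max (s i).card (t i).card + 1)
  obtain ⟨hgap, hsub⟩ : (t i).card - (s i).card ≤ (t j).card - (s j).card ∧ s i ≤ s j :=
    hg _ _ (Nat.zero_le _)
  have hj : max (s i).card (t i).card < j := g.strictMono.le_apply
  obtain ⟨d, hd⟩ := le_iff_exists_add.mp hsub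
  have hcv : c (s j) (t i + d) := hd ▸ c.add (hst i) (c.refl d)
  have hcard : (t i + d).card = (t j).card := by
    have hsj : (s j).card = (s i).card + d.card := by rw [hd, Multiset.card_add]
    have hnotbetween := hadj j (t i + d) hcv
    rw [Multiset.card_add] at hnotbetween ⊢
    have := hlt i
    omega
  refine hfar j (s j) (t i + d) (c.refl _) rfl hcard ⟨hcv, ?_, hcard ▸ (hlt j).le⟩
  calc (s j).subDist (t i + d) = (s i).subDist (t i) := by rw [hd, Multiset.subDist_add_right]
    _ ≤ max (s i).card (t i).card := Multiset.subDist_le_max_card _ _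
    _ ≤ j := hj.le

theorem AddCon.exists_reflTransGen_monotoneStep :
    ∃ N, ∀ s t, c s t → s.card ≤ t.card → ReflTransGen (MonotoneStep c N) s t := by
  obtain ⟨N₁, hN₁⟩ := c.exists_reflTransGen_monotoneStep_of_card_eq
  obtain ⟨N₂, hN₂⟩ := c.exists_monotoneStep_of_no_card_between
  have card_eq s t (hst : c s t) (hcard : s.card = t.card) :
      ReflTransGen (MonotoneStep c (max N₁ N₂)) s t :=
    ReflTransGen.mono (fun _ _ => MonotoneStep.mono (le_max_left _ _)) _ _ (hN₁ s t hst hcard)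
  refine ⟨max N₁ N₂, fun s t hst hle => ?_⟩
  induction hd : t.card - s.card using Nat.strong_induction_on generalizing s t with
  | _ d ih =>
  rcases hle.eq_or_lt with hcard | hlt
  · exact card_eq s t hst hcard
  by_cases hmid : ∃ w, c s w ∧ s.card < w.card ∧ w.card < t.card
  · obtain ⟨w, hsw, hsw', hwt⟩ := hmid
    exact (ih _ (by omega) s w hsw hsw'.le rfl).trans
      (ih _ (by omega) w t (c.trans (c.symm hsw) hst) hwt.le rfl)
  · push Not at hmid
    obtain ⟨u, v, hsu, hu, hv, huv⟩ := hN₂ s t hst hlt hmid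
    have hvt : c v t := c.trans (c.symm huv.1) (c.trans (c.symm hsu) hst)
    exact (card_eq s u hsu hu.symm).trans
      (.head (huv.mono (le_max_right _ _)) (card_eq v t hvt hv))

end MonotoneChains

def factorizationCon {P A : Type*} [CommMonoid A] (π : P → A) : AddCon (Multiset P) where
  r s t := (s.map π).prod = (t.map π).prod
  iseqv := ⟨fun _ => rfl, Eq.symm, Eq.trans⟩
  add' h₁ h₂ := by simp only [Multiset.map_add, Multiset.prod_add, h₁, h₂]

section Factorizations

variable {H : Type*} [CommMonoid H] [DecidableEq (Associates H)]

theorem MonotoneNChain.symm {a : H} {N : ℕ} {z z' : Multiset (Associates H)}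
    (h : MonotoneNChain a N z z') : MonotoneNChain a N z' z := by
  obtain ⟨n, c, hc₀, hcn, hfac, hdist, hmono⟩ := h
  refine ⟨n, fun i => c (n - i), by simpa using hcn, by simpa using hc₀,
    fun i _ => hfac _ (Nat.sub_le n i), fun i hi => ?_, ?_⟩
  · have h := hdist (n - (i + 1)) (by omega)
    rw [show n - (i + 1) + 1 = n - i by omega] at h
    rwa [factorizationDist, max_comm]
  · rcases hmono with hmono | hmono
    exacts [.inr fun i j hij hjn => hmono _ _ (by omega) (by omega),
      .inl fun i j hij hjn => hmono _ _ (by omega) (by omega)]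

theorem monotoneNChain_of_reflTransGen {a : H} {N : ℕ}
    {s t : Multiset {x : Associates H // Irreducible x}}
    (hs : IsFactorizationOf (s.map Subtype.val) a)
    (h : ReflTransGen (MonotoneStep (factorizationCon Subtype.val) N) s t) :
    MonotoneNChain a N (s.map Subtype.val) (t.map Subtype.val) := by
  obtain ⟨n, c, rfl, rfl, hc⟩ := h.exists_seq_of_refl (MonotoneStep.refl _ _)
  have hclass : ∀ i, factorizationCon Subtype.val (c 0) (c i) := fun i => by
    induction i with
    | zero => exact AddCon.refl _ _
    | succ i ih => exact AddCon.trans _ ih (hc i).1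
  refine ⟨n, fun i => (c i).map Subtype.val, rfl, rfl, fun i _ => ⟨?_, ?_⟩,
    fun i _ => ?_, .inl fun i j hij _ => ?_⟩
  · simp only [Multiset.mem_map]
    rintro _ ⟨x, -, rfl⟩
    exact x.2
  · exact (hclass i).symm.trans hs.2
  · exact (Multiset.subDist_map Subtype.val_injective _ _).trans_le (hc i).2.1
  · simp only [Multiset.card_map]
    exact monotone_nat_of_le_succ (fun i => (hc i).2.2) hij

end Factorizations

theorem monotoneCatenaryDegree_finite_of_finitelyGenerated_general {H : Type*} [CommMonoid H]
    [DecidableEq (Associates H)]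
    (hfg : ∃ S : Finset (Associates H),
      Submonoid.closure (S : Set (Associates H)) = ⊤) :
    ∃ N : ℕ, ∀ (a : H) (z z' : Multiset (Associates H)),
      IsFactorizationOf z a → IsFactorizationOf z' a → MonotoneNChain a N z z' := by
  have : Monoid.FG (Associates H) := ⟨hfg⟩
  have : Finite {x : Associates H // Irreducible x} := finite_irreducible.to_subtype
  obtain ⟨N, hN⟩ := AddCon.exists_reflTransGen_monotoneStep
    (factorizationCon (Subtype.val : {x : Associates H // Irreducible x} → Associates H))
  refine ⟨N, fun a z z' hz hz' => ?_⟩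
  wlog hle : z.card ≤ z'.card generalizing z z'
  · exact (this z' z hz' hz (by omega)).symm
  lift z to Multiset {x : Associates H // Irreducible x} using hz.1
  lift z' to Multiset {x : Associates H // Irreducible x} using hz'.1
  exact monotoneNChain_of_reflTransGen hz (hN z z' (hz.2.trans hz'.2.symm) (by simpa using hle))

/-- If `H` is a commutative unit-cancellative monoid whose associated reduced monoid
`H_red = Associates H` is finitely generated, then the monotone catenary degree
`c_mon(H)` is finite. -/
theorem monotoneCatenaryDegree_finite_of_finitelyGenerated {H : Type*} [CommMonoid H]
    [DecidableEq (Associates H)]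
    (hUC : ∀ a u : H, a * u = a → IsUnit u)
    (hfg : ∃ S : Finset (Associates H),
      Submonoid.closure (S : Set (Associates H)) = ⊤) :
    ∃ N : ℕ, ∀ (a : H) (z z' : Multiset (Associates H)),
      IsFactorizationOf z a → IsFactorizationOf z' a → MonotoneNChain a N z z' :=
  monotoneCatenaryDegree_finite_of_finitelyGenerated_general hfg
end

section
/- In the power monoid P_{fin,0}(ℕ₀) of finite subsets of ℕ₀ containing 0 under set addition, let H be the submonoid generated by {0,1}, A = {0,1,3}, and B = {0,2,3}. Then for every k ∈ ℕ₀, {0,1} + kA = {0,1} + kB = [0, 3k+1] (the integer interval from 0 to 3k+1). -/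
open Pointwise

/-- The `k`-fold sumset `kA = A + ⋯ + A` (with `0A = {0}`) in the power monoid of
finite subsets of `ℕ` containing `0` under set addition. -/
def kfoldSumset (k : ℕ) (A : Finset ℕ) : Finset ℕ :=
  Nat.rec {0} (fun _ S => S + A) k

lemma Icc_add_A (n : ℕ) (hn : 1 ≤ n) :
    Finset.Icc 0 n + ({0, 1, 3} : Finset ℕ) = Finset.Icc 0 (n + 3) := by
  ext x
  simp only [Finset.mem_add, Finset.mem_Icc, Finset.mem_insert, Finset.mem_singleton]
  constructor
  · rintro ⟨a, ⟨-, ha⟩, b, hb, rfl⟩; omega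
  · rintro ⟨-, hx⟩
    rcases le_or_gt x n with h | h
    · exact ⟨x, ⟨Nat.zero_le _, h⟩, 0, by simp, by omega⟩
    · rcases le_or_gt x (n + 1) with h2 | h2
      · exact ⟨x - 1, ⟨Nat.zero_le _, by omega⟩, 1, by simp, by omega⟩
      · exact ⟨x - 3, ⟨Nat.zero_le _, by omega⟩, 3, by simp, by omega⟩

lemma Icc_add_B (n : ℕ) (hn : 1 ≤ n) :
    Finset.Icc 0 n + ({0, 2, 3} : Finset ℕ) = Finset.Icc 0 (n + 3) := by
  ext x
  simp only [Finset.mem_add, Finset.mem_Icc, Finset.mem_insert, Finset.mem_singleton]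
  constructor
  · rintro ⟨a, ⟨-, ha⟩, b, hb, rfl⟩; omega
  · rintro ⟨-, hx⟩
    rcases le_or_gt x n with h | h
    · exact ⟨x, ⟨Nat.zero_le _, h⟩, 0, by simp, by omega⟩
    · rcases le_or_gt x (n + 2) with h2 | h2
      · exact ⟨x - 2, ⟨Nat.zero_le _, by omega⟩, 2, by simp, by omega⟩
      · exact ⟨x - 3, ⟨Nat.zero_le _, by omega⟩, 3, by simp, by omega⟩

/-- In the power monoid `P_{fin,0}(ℕ₀)`, with `A = {0,1,3}` and `B = {0,2,3}`,
for every `k ∈ ℕ₀` we have `{0,1} + kA = {0,1} + kB = [0, 3k+1]`. -/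
theorem sumset_interval (k : ℕ) :
    ({0, 1} : Finset ℕ) + kfoldSumset k {0, 1, 3} = Finset.Icc 0 (3 * k + 1) ∧
    ({0, 1} : Finset ℕ) + kfoldSumset k {0, 2, 3} = Finset.Icc 0 (3 * k + 1) := by
  induction k with
  | zero =>
      constructor <;> · show ({0,1} : Finset ℕ) + {0} = _; decide
  | succ n ih =>
      obtain ⟨ih1, ih2⟩ := ih
      constructor
      · show ({0,1} : Finset ℕ) + (kfoldSumset n {0,1,3} + {0,1,3}) = _
        rw [← add_assoc, ih1, Icc_add_A _ (by omega), show 3*n+1+3 = 3*(n+1)+1 by ring]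
      · show ({0,1} : Finset ℕ) + (kfoldSumset n {0,2,3} + {0,2,3}) = _
        rw [← add_assoc, ih2, Icc_add_B _ (by omega), show 3*n+1+3 = 3*(n+1)+1 by ring]
end

section
/- Let k, d ∈ ℕ with d ≥ 10, y₁, y₂ ∈ ℕ with y₁, y₂ ≥ 2, and set L₁ = y₁ + ({νd : ν ∈ [0,k]} ∪ {kd+2}) and L₂ = y₂ + ({νd : ν ∈ [0,k]} ∪ {kd+1, kd+3}). Put y = y₁ + y₂. Then y + kd + 1 has a unique representation as a₁ + a₂ with a₁ ∈ L₁ and a₂ ∈ L₂, namely a₁ = y₁ and a₂ = y₂ + kd + 1; and y + kd + 2 has a unique representation as b₁ + b₂ with b₁ ∈ L₁ and b₂ ∈ L₂, namely b₁ = y₁ + kd + 2 and b₂ = y₂. In particular |a₁ − b₁| ≥ kd and |a₂ − b₂| ≥ kd. -/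
/-- Let `k, d ∈ ℕ` with `d ≥ 10`, `y₁, y₂ ≥ 2`, and
`L₁ = y₁ + ({νd : ν ∈ [0,k]} ∪ {kd+2})`,
`L₂ = y₂ + ({νd : ν ∈ [0,k]} ∪ {kd+1, kd+3})`.
Then `y₁ + y₂ + kd + 1` and `y₁ + y₂ + kd + 2` each have a unique representation
as a sum of an element of `L₁` and an element of `L₂`, namely the ones indicated;
in particular the respective summands differ by at least `kd`. -/
theorem unique_representation_in_sumset (k d y₁ y₂ : ℕ)
    (hk : 1 ≤ k) (hd : 10 ≤ d) (h1 : 2 ≤ y₁) (h2 : 2 ≤ y₂)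
    (L₁ L₂ : Set ℕ)
    (hL₁ : L₁ = {n | (∃ ν ≤ k, n = y₁ + ν * d) ∨ n = y₁ + (k * d + 2)})
    (hL₂ : L₂ = {n | (∃ ν ≤ k, n = y₂ + ν * d) ∨ n = y₂ + (k * d + 1) ∨
      n = y₂ + (k * d + 3)}) :
    (∀ a₁ ∈ L₁, ∀ a₂ ∈ L₂, a₁ + a₂ = y₁ + y₂ + (k * d + 1) →
      a₁ = y₁ ∧ a₂ = y₂ + (k * d + 1)) ∧
    (∀ b₁ ∈ L₁, ∀ b₂ ∈ L₂, b₁ + b₂ = y₁ + y₂ + (k * d + 2) →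
      b₁ = y₁ + (k * d + 2) ∧ b₂ = y₂) ∧
    (∀ a₁ ∈ L₁, ∀ a₂ ∈ L₂, ∀ b₁ ∈ L₁, ∀ b₂ ∈ L₂,
      a₁ + a₂ = y₁ + y₂ + (k * d + 1) → b₁ + b₂ = y₁ + y₂ + (k * d + 2) →
      k * d ≤ ((a₁ : ℤ) - (b₁ : ℤ)).natAbs ∧ k * d ≤ ((a₂ : ℤ) - (b₂ : ℤ)).natAbs) := by
  subst hL₁ hL₂
  have mulcase : ∀ ν₁ ν₂ c : ℕ, 1 ≤ c → c ≤ 2 → ν₁ * d + ν₂ * d = k * d + c → False := by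
    intro ν₁ ν₂ c hc1 hc2 h
    have hdvd : d ∣ c := by
      have h1 : d ∣ (ν₁ + ν₂) * d := dvd_mul_left d _
      have h2 : d ∣ k * d := dvd_mul_left d k
      have h3 : d ∣ k * d + c := by rw [← h]; rw [add_mul] at h1; exact h1
      have := Nat.dvd_sub h3 h2
      simpa using this
    have := Nat.le_of_dvd (by omega) hdvd
    omega
  have key1 : ∀ a₁ ∈ {n | (∃ ν ≤ k, n = y₁ + ν * d) ∨ n = y₁ + (k * d + 2)},
      ∀ a₂ ∈ {n | (∃ ν ≤ k, n = y₂ + ν * d) ∨ n = y₂ + (k * d + 1) ∨ n = y₂ + (k * d + 3)},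
      a₁ + a₂ = y₁ + y₂ + (k * d + 1) → a₁ = y₁ ∧ a₂ = y₂ + (k * d + 1) := by
    rintro a₁ ha₁ a₂ ha₂ hsum
    simp only [Set.mem_setOf_eq] at ha₁ ha₂
    rcases ha₁ with ⟨ν₁, hν₁, rfl⟩ | rfl
    · rcases ha₂ with ⟨ν₂, hν₂, rfl⟩ | rfl | rfl
      · exact absurd (by omega : ν₁ * d + ν₂ * d = k * d + 1) (fun h => mulcase ν₁ ν₂ 1 (by omega) (by omega) h)
      · have hz : ν₁ * d = 0 := by omega
        constructor <;> omega
      · omega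
    · rcases ha₂ with ⟨ν₂, hν₂, rfl⟩ | rfl | rfl
      · have : ν₂ * d + k * d + 1 = k * d := by omega
        have hle : ν₂ * d ≥ 0 := Nat.zero_le _
        omega
      · omega
      · omega
  have key2 : ∀ b₁ ∈ {n | (∃ ν ≤ k, n = y₁ + ν * d) ∨ n = y₁ + (k * d + 2)},
      ∀ b₂ ∈ {n | (∃ ν ≤ k, n = y₂ + ν * d) ∨ n = y₂ + (k * d + 1) ∨ n = y₂ + (k * d + 3)},
      b₁ + b₂ = y₁ + y₂ + (k * d + 2) → b₁ = y₁ + (k * d + 2) ∧ b₂ = y₂ := by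
    rintro b₁ hb₁ b₂ hb₂ hsum
    simp only [Set.mem_setOf_eq] at hb₁ hb₂
    rcases hb₁ with ⟨ν₁, hν₁, rfl⟩ | rfl
    · rcases hb₂ with ⟨ν₂, hν₂, rfl⟩ | rfl | rfl
      · exact absurd (by omega : ν₁ * d + ν₂ * d = k * d + 2) (fun h => mulcase ν₁ ν₂ 2 (by omega) (by omega) h)
      · have h : ν₁ * d = 1 := by omega
        have hdvd : d ∣ 1 := Dvd.intro_left ν₁ h
        have := Nat.le_of_dvd one_pos hdvd
        omega
      · omega
    · rcases hb₂ with ⟨ν₂, hν₂, rfl⟩ | rfl | rfl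
      · have hz : ν₂ * d = 0 := by omega
        constructor <;> omega
      · omega
      · omega
  refine ⟨key1, key2, ?_⟩
  intro a₁ ha₁ a₂ ha₂ b₁ hb₁ b₂ hb₂ hs1 hs2
  obtain ⟨rfl, rfl⟩ := key1 a₁ ha₁ a₂ ha₂ hs1
  obtain ⟨rfl, rfl⟩ := key2 b₁ hb₁ b₂ hb₂ hs2
  constructor <;> push_cast <;> omega
end

section
/- Let R be an integral domain and r an ideal system on R. If R satisfies the r-Krull Intersection Theorem (i.e., ⋂_{n ∈ ℕ₀} (Iⁿ)_r = {0} for every proper nonzero r-ideal I of R), then the semigroup I_r(R) of nonzero r-ideals of R under r-multiplication is unit-cancellative. -/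
open Pointwise

/-- An ideal system `r` on an integral domain `R`, with the standing convention that
every `r`-ideal is an ordinary ring ideal (`I_r(R) ⊆ I(R)`). The map `cl` is the
closure `X ↦ X_r`. -/
structure IdealSystem (R : Type*) [CommRing R] [IsDomain R] where
  cl : Set R → Set R
  subset_cl : ∀ X : Set R, X ⊆ cl X
  cl_mono : ∀ X Y : Set R, X ⊆ cl Y → cl X ⊆ cl Y
  principal_subset : ∀ c : R, {x : R | ∃ y : R, x = c * y} ⊆ cl {c}
  smul_cl : ∀ (c : R) (X : Set R), c • cl X = cl (c • X)
  zero_mem : ∀ X : Set R, (0 : R) ∈ cl X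
  add_mem : ∀ X : Set R, ∀ a ∈ cl X, ∀ b ∈ cl X, a + b ∈ cl X
  mul_mem : ∀ (X : Set R) (r : R), ∀ a ∈ cl X, r * a ∈ cl X

variable {R : Type*} [CommRing R] [IsDomain R]

/-- `I` is a nonzero `r`-ideal, i.e. an element of the semigroup `I_r(R)`. -/
def IdealSystem.IsRIdeal (rs : IdealSystem R) (I : Set R) : Prop :=
  rs.cl I = I ∧ I ≠ {0}

lemma IdealSystem.cl_subset_cl (rs : IdealSystem R) {X Y : Set R} (h : X ⊆ Y) :
    rs.cl X ⊆ rs.cl Y :=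
  rs.cl_mono X Y (h.trans (rs.subset_cl Y))

/-- If the domain `R` satisfies the `r`-Krull Intersection Theorem, then the semigroup
`I_r(R)` of nonzero `r`-ideals under `r`-multiplication is unit-cancellative:
`(I·J)_r = I` implies `J = R`. -/
theorem unitCancellative_of_krullIntersection (rs : IdealSystem R)
    (hKIT : ∀ I : Set R, rs.IsRIdeal I → I ≠ Set.univ →
      (⋂ n : ℕ, rs.cl (I ^ n)) = {0}) :
    ∀ I J : Set R, rs.IsRIdeal I → rs.IsRIdeal J → rs.cl (I * J) = I →
      J = Set.univ := by
  intro I J hI hJ hIJ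
  by_contra hJu
  have key : ∀ n : ℕ, I ⊆ rs.cl (J ^ n) := by
    intro n
    induction n with
    | zero =>
      intro x _
      have : x ∈ {y : R | ∃ z : R, y = 1 * z} := ⟨x, (one_mul x).symm⟩
      have := rs.principal_subset 1 this
      rw [pow_zero, ← Set.singleton_one]; exact this
    | succ n ih =>
      rw [← hIJ]
      apply rs.cl_mono
      rintro _ ⟨a, ha, b, hb, rfl⟩
      have ha' : a ∈ rs.cl (J ^ n) := ih ha
      have : b * a ∈ b • rs.cl (J ^ n) := ⟨a, ha', rfl⟩
      rw [rs.smul_cl] at this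
      have hsub : b • (J ^ n : Set R) ⊆ (J ^ (n + 1) : Set R) := by
        rintro _ ⟨c, hc, rfl⟩
        show b * c ∈ J ^ (n + 1)
        rw [pow_succ, show b * c = c * b from mul_comm b c]
        exact Set.mul_mem_mul hc hb
      have : b * a ∈ rs.cl (J ^ (n + 1)) := rs.cl_subset_cl hsub this
      simpa [mul_comm] using this
  have hIsub : I ⊆ ⋂ n : ℕ, rs.cl (J ^ n) := Set.subset_iInter key
  rw [hKIT J hJ hJu] at hIsub
  have hI0 : I = {0} := by
    apply Set.Subset.antisymm hIsub
    intro x hx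
    rw [Set.mem_singleton_iff] at hx
    subst hx
    rw [← hIJ]
    exact rs.zero_mem _
  exact hI.2 hI0
end

section
/- Let R be an integral domain and r an ideal system on R. Then I_r(R) is unit-cancellative if and only if I_r(R) has no nontrivial idempotents and, for every I ∈ I_r(R), the set {J ∈ I_r(R) : (IJ)_r = I} has a minimal element with respect to inclusion. -/
open Pointwise

variable {R : Type*} [CommRing R] [IsDomain R]


namespace IdealSystem

variable (rs : IdealSystem R)

lemma cl_mono' {X Y : Set R} (h : X ⊆ Y) : rs.cl X ⊆ rs.cl Y :=
  rs.cl_mono X Y (h.trans (rs.subset_cl Y))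

lemma cl_idem (X : Set R) : rs.cl (rs.cl X) = rs.cl X :=
  Set.Subset.antisymm (rs.cl_mono _ _ subset_rfl) (rs.subset_cl _)

lemma mul_cl_subset (X Y : Set R) : X * rs.cl Y ⊆ rs.cl (X * Y) := by
  rintro _ ⟨a, ha, b, hb, rfl⟩
  have h1 : a * b ∈ a • rs.cl Y := ⟨b, hb, rfl⟩
  rw [rs.smul_cl] at h1
  refine rs.cl_mono' ?_ h1
  rintro _ ⟨c, hc, rfl⟩
  exact ⟨a, ha, c, hc, rfl⟩

lemma cl_mul_cl (X Y : Set R) : rs.cl (X * rs.cl Y) = rs.cl (X * Y) := by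
  apply Set.Subset.antisymm
  · exact rs.cl_mono _ _ (by
      calc X * rs.cl Y ⊆ rs.cl (X * Y) := rs.mul_cl_subset X Y
        _ ⊆ rs.cl (rs.cl (X * Y)) := rs.subset_cl _)
    |>.trans (le_of_eq (rs.cl_idem _))
  · exact rs.cl_mono' (Set.mul_subset_mul_left (rs.subset_cl Y))

end IdealSystem

/-- `I_r(R)` is unit-cancellative if and only if it has no nontrivial idempotents and
for every `I ∈ I_r(R)` the set `{J ∈ I_r(R) : (I·J)_r = I}` has a minimal element
with respect to inclusion. -/
theorem unitCancellative_iff_no_idempotents_and_minimal (rs : IdealSystem R) :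
    (∀ I J : Set R, rs.IsRIdeal I → rs.IsRIdeal J → rs.cl (I * J) = I →
        J = Set.univ) ↔
    ((∀ A : Set R, rs.IsRIdeal A → rs.cl (A * A) = A → A = Set.univ) ∧
     (∀ I : Set R, rs.IsRIdeal I →
        ∃ J : Set R, (rs.IsRIdeal J ∧ rs.cl (I * J) = I) ∧
          ∀ J' : Set R, rs.IsRIdeal J' → rs.cl (I * J') = I → J' ⊆ J → J' = J)) := by
  constructor
  · intro h
    constructor
    · intro A hA hAA
      exact h A A hA hA hAA
    · intro I hI
      have huniv : rs.IsRIdeal (Set.univ : Set R) := by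
        constructor
        · exact Set.Subset.antisymm (Set.subset_univ _) (rs.subset_cl _)
        · intro he
          have : (1 : R) ∈ (Set.univ : Set R) := Set.mem_univ 1
          rw [he] at this
          exact one_ne_zero (Set.mem_singleton_iff.mp this)
      have hmul : I * (Set.univ : Set R) = I := by
        apply Set.Subset.antisymm
        · rintro _ ⟨a, ha, b, -, rfl⟩
          have : b * a ∈ rs.cl I := rs.mul_mem I b a (hI.1.symm ▸ ha)
          rw [hI.1] at this
          show a * b ∈ I
          rwa [mul_comm]
        · intro a ha
          exact ⟨a, ha, 1, Set.mem_univ 1, mul_one a⟩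
      refine ⟨Set.univ, ⟨huniv, by rw [hmul, hI.1]⟩, ?_⟩
      intro J' hJ' hIJ' _
      exact h I J' hI hJ' hIJ'
  · rintro ⟨hidem, hmin⟩ I J hI hJ hIJ
    obtain ⟨M, ⟨hM, hIM⟩, hMmin⟩ := hmin I hI
    -- cl (M*M) is also in the set
    have hMM_ideal : rs.IsRIdeal (rs.cl (M * M)) := by
      constructor
      · exact rs.cl_idem _
      · obtain ⟨a, ha, hane⟩ : ∃ a ∈ M, a ≠ 0 := by
          by_contra hc
          push_neg at hc
          apply hM.2
          apply Set.Subset.antisymm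
          · intro x hx; exact hc x hx
          · intro x hx
            rw [Set.mem_singleton_iff.mp hx]
            have := rs.zero_mem M
            rwa [hM.1] at this
        intro he
        have : a * a ∈ rs.cl (M * M) := rs.subset_cl _ ⟨a, ha, a, ha, rfl⟩
        rw [he] at this
        exact mul_ne_zero hane hane (Set.mem_singleton_iff.mp this)
    have hIMM : rs.cl (I * rs.cl (M * M)) = I := by
      rw [rs.cl_mul_cl, show I * (M * M) = M * (I * M) from mul_left_comm I M M,
        ← rs.cl_mul_cl, hIM, mul_comm, hIM]
    have hMMsub : rs.cl (M * M) ⊆ M := by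
      have h1 : M * M ⊆ rs.cl M := by
        rintro _ ⟨a, ha, b, hb, rfl⟩
        exact rs.mul_mem M a b (hM.1.symm ▸ hb)
      have := rs.cl_mono _ _ h1
      rwa [hM.1] at this
    have hMeq : rs.cl (M * M) = M := hMmin _ hMM_ideal hIMM hMMsub
    have hMuniv : M = Set.univ := hidem M hM hMeq
    have hJM := hMmin J hJ hIJ (by rw [hMuniv]; exact Set.subset_univ J)
    rw [hJM, hMuniv]
end

section
/- Let R be a strongly primary domain (i.e., R is local with maximal ideal m and for every nonzero a ∈ m there is n ∈ ℕ with mⁿ ⊂ aR) and let r be an ideal system on R. Then R satisfies the r-Krull Intersection Theorem: for every r-ideal I ≠ R of R, ⋂_{n ∈ ℕ₀} (Iⁿ)_r = {0}. -/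
open Pointwise

variable {R : Type*} [CommRing R] [IsDomain R]

/-- If `R` is a strongly primary domain (local, and for every nonzero `a` in the maximal
ideal `m` there is `n` with `mⁿ ⊆ aR`), then `R` satisfies the `r`-Krull Intersection
Theorem: for every `r`-ideal `I ≠ R`, `⋂_{n} (Iⁿ)_r = {0}`. -/
theorem krullIntersection_of_stronglyPrimary [IsLocalRing R] (rs : IdealSystem R)
    (hsp : ∀ a : R, a ≠ 0 → a ∈ IsLocalRing.maximalIdeal R →
      ∃ n : ℕ, (IsLocalRing.maximalIdeal R) ^ n ≤ Ideal.span {a}) :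
    ∀ I : Set R, rs.cl I = I → I ≠ Set.univ →
      (⋂ n : ℕ, rs.cl (I ^ n)) = {0} := by
  intro I hclI hIuniv
  -- I is contained in the maximal ideal
  have hIm : I ⊆ (IsLocalRing.maximalIdeal R : Set R) := by
    intro x hx
    rw [SetLike.mem_coe, IsLocalRing.mem_maximalIdeal, mem_nonunits_iff]
    intro hu
    apply hIuniv
    have h1 : (1 : R) ∈ I := by
      have := rs.mul_mem I (↑hu.unit⁻¹) x (hclI ▸ rs.subset_cl I hx)
      rwa [IsUnit.val_inv_mul, hclI] at this
    ext r
    simp only [Set.mem_univ, iff_true]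
    have := rs.mul_mem I r 1 (hclI ▸ rs.subset_cl I h1)
    rwa [mul_one, hclI] at this
  ext a
  simp only [Set.mem_iInter, Set.mem_singleton_iff]
  constructor
  · intro ha
    by_contra hne
    -- a ∈ I
    have haI : a ∈ I := by
      have := ha 1
      rwa [pow_one, hclI] at this
    have ham : a ∈ IsLocalRing.maximalIdeal R := hIm haI
    obtain ⟨n, hn⟩ := hsp a hne ham
    -- set power I^n is contained in ideal power mⁿ
    have hpow : ∀ k : ℕ, (I ^ k : Set R) ⊆ ((IsLocalRing.maximalIdeal R ^ k : Ideal R) : Set R) := by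
      intro k
      induction k with
      | zero =>
        intro x hx
        simp only [pow_zero] at hx ⊢
        simp [Set.mem_one.mp hx]
      | succ k ih =>
        intro x hx
        rw [pow_succ] at hx ⊢
        obtain ⟨y, hy, z, hz, rfl⟩ := Set.mem_mul.mp hx
        exact Ideal.mul_mem_mul (ih hy) (hIm hz)
    -- I^(n+1) ⊆ a • I
    have hsub : (I ^ (n + 1) : Set R) ⊆ a • I := by
      intro x hx
      rw [pow_succ] at hx
      obtain ⟨y, hy, z, hz, rfl⟩ := Set.mem_mul.mp hx
      have hy' : y ∈ Ideal.span {a} := hn (hpow n hy)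
      obtain ⟨c, rfl⟩ := Ideal.mem_span_singleton'.mp hy'
      refine ⟨c * z, ?_, ?_⟩
      · have := rs.mul_mem I c z (hclI ▸ rs.subset_cl I hz)
        rwa [hclI] at this
      · simp [smul_eq_mul]; ring
    -- hence a ∈ a • I
    have haaI : a ∈ a • I := by
      have h1 : rs.cl (I ^ (n + 1)) ⊆ rs.cl (a • I) :=
        rs.cl_mono _ _ (fun x hx => rs.subset_cl _ (hsub hx))
      have h2 : rs.cl (a • I) = a • I := by
        rw [← rs.smul_cl, hclI]
      exact h2 ▸ h1 (ha (n + 1))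
    obtain ⟨c, hc, hac⟩ := haaI
    have : a * c = a * 1 := by rw [mul_one]; exact hac
    have hc1 : c = 1 := mul_left_cancel₀ hne this
    have : (1 : R) ∈ IsLocalRing.maximalIdeal R := hc1 ▸ hIm hc
    exact (Ideal.ne_top_iff_one _).mp (IsLocalRing.maximalIdeal.isMaximal R).ne_top this
  · intro h n
    exact h ▸ rs.zero_mem _
end

section
/- Let S be a commutative ring, a, b ∈ S, and R ⊂ S a subset such that x − y ∈ S× for all distinct x, y ∈ R. If 𝕀 is a finite set of ideals of S with |𝕀| < |R| and b ∉ I for every I ∈ 𝕀, then there exists η ∈ R such that a + ηb ∉ ⋃_{I ∈ 𝕀} I. -/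
/-- Let `S` be a commutative ring, `a, b ∈ S`, and `R ⊆ S` a set whose pairwise
differences are units. If `𝕀` is a finite set of ideals of `S` with `|𝕀| < |R|`
and `b ∉ I` for all `I ∈ 𝕀`, then there is `η ∈ R` with `a + η * b ∉ ⋃_{I ∈ 𝕀} I`. -/
theorem exists_avoiding_translate {S : Type*} [CommRing S] (a b : S) (R : Set S)
    (hR : ∀ x ∈ R, ∀ y ∈ R, x ≠ y → IsUnit (x - y))
    (𝕀 : Finset (Ideal S))
    (hcard : (𝕀.card : Cardinal) < Cardinal.mk R)
    (hb : ∀ I ∈ 𝕀, b ∉ I) :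
    ∃ η ∈ R, ∀ I ∈ 𝕀, a + η * b ∉ I := by
  by_contra h
  push_neg at h
  have hex : ∀ η : R, ∃ I : 𝕀, a + (η : S) * b ∈ (I : Ideal S) := by
    intro η
    obtain ⟨I, hI, hmem⟩ := h η η.2
    exact ⟨⟨I, hI⟩, hmem⟩
  choose g hg using hex
  have hginj : Function.Injective g := by
    intro η η' heq
    by_contra hne
    have hne' : (η : S) ≠ (η' : S) := fun hc => hne (Subtype.ext hc)
    have hu := hR η η.2 η' η'.2 hne'
    have h1 := hg η
    have h2 := hg η'
    rw [heq] at h1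
    have hdiff : ((η : S) - η') * b ∈ (g η' : Ideal S) := by
      have : (a + (η : S) * b) - (a + (η' : S) * b) ∈ (g η' : Ideal S) :=
        Ideal.sub_mem _ h1 h2
      convert this using 1; ring
    have hbmem : b ∈ (g η' : Ideal S) := by
      obtain ⟨u, hu⟩ := hu
      have := Ideal.mul_mem_left _ (↑u⁻¹) hdiff
      rw [← hu, ← mul_assoc, u.inv_mul, one_mul] at this; exact this
    exact hb _ (g η').2 hbmem
  have hle : Cardinal.mk R ≤ (𝕀.card : Cardinal) := by
    calc Cardinal.mk R ≤ Cardinal.mk 𝕀 := Cardinal.mk_le_of_injective hginj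
    _ = 𝕀.card := Cardinal.mk_coe_finset
  exact absurd hcard (not_lt.mpr hle)
end

section
/- Let H₁ and H₂ be atomic commutative unit-cancellative monoids, each satisfying the Structure Theorem for Sets of Lengths and having finite weak successive distance δ_w. Then the direct product H₁ × H₂ has finite weak successive distance: there exists a constant C such that for every a ∈ H₁ × H₂ and all k, ℓ ∈ L(a), d(Z_k(a), Z_ℓ(a)) ≤ C·|ℓ − k|. -/
/-- `H` satisfies the Structure Theorem for Sets of Lengths: there are a bound `M`
and a finite nonempty set `Δ ⊆ ℕ` of differences such that every set of lengths is
an AAMP with some difference `d ∈ Δ` and bound `M`. -/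
def SatisfiesSTSL (H : Type*) [CommMonoid H] : Prop :=
  ∃ (M : ℕ) (Δ : Finset ℕ), Δ.Nonempty ∧ (∀ d ∈ Δ, 1 ≤ d) ∧
    ∀ a : H, ∃ d ∈ Δ, IsAAMP ((fun n : ℕ => (n : ℤ)) '' Lengths a) d M

/-- `H` has weak successive distance bounded by `N`:
`d(Z_k(a), Z_l(a)) ≤ N·|l - k|` for all `a ∈ H` and `k, l ∈ L(a)`. -/
def WeakSuccDistBound (H : Type*) [CommMonoid H] [DecidableEq (Associates H)]
    (N : ℕ) : Prop :=
  ∀ (a : H) (k l : ℕ), k ∈ Lengths a → l ∈ Lengths a →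
    ∃ x y : Multiset (Associates H), IsFactorizationOf x a ∧ IsFactorizationOf y a ∧
      x.card = k ∧ y.card = l ∧
      factorizationDist x y ≤ N * ((l : ℤ) - (k : ℤ)).natAbs

/-!
Sets of lengths in `H₁ × H₂` are sumsets `L₁ + L₂`, and a factorization of `(a₁, a₂)` is a
factorization of `a₁` next to one of `a₂`, at distance at most the sum of the two distances.
So for lengths `k₁ + k₂ < l₁ + l₂` with `t = l₁ + l₂ - (k₁ + k₂)` it suffices to write
`l₁ + l₂ = n₁ + n₂` with `nᵢ ∈ Lᵢ` and `|nᵢ - kᵢ| = O(t)`, and then to apply the weak successive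
distance bound of each factor to `kᵢ, nᵢ`. By the structure theorem each `Lᵢ` is periodic, with
a period `D` common to all sets of lengths, on a window it overshoots by at most `M`. If `l₁` is
far from `k₁`, then `L₁` and `l₁ + l₂ - L₂` are both `D`-periodic through `l₁` on an interval of
length `D` next to `k₁`, which therefore contains a suitable `n₁`.
-/

namespace Multiset

variable {α β γ : Type*}

lemma card_map_add_map_sub_le [DecidableEq α] [DecidableEq β] [DecidableEq γ]
    (f : α → γ) (g : β → γ) (s₁ t₁ : Multiset α) (s₂ t₂ : Multiset β) :
    card ((s₁.map f + s₂.map g) - (t₁.map f + t₂.map g)) ≤ card (s₁ - t₁) + card (s₂ - t₂) := by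
  have hle : s₁.map f + s₂.map g ≤ ((s₁ - t₁).map f + (s₂ - t₂).map g) + (t₁.map f + t₂.map g) := by
    rw [add_add_add_comm, ← map_add, ← map_add]
    exact add_le_add (map_le_map le_tsub_add) (map_le_map le_tsub_add)
  calc card ((s₁.map f + s₂.map g) - (t₁.map f + t₂.map g))
      ≤ card ((s₁ - t₁).map f + (s₂ - t₂).map g) := card_le_card (tsub_le_iff_right.2 hle)
    _ = card (s₁ - t₁) + card (s₂ - t₂) := by simp

lemma prod_map_filter_of_forall_not [CommMonoid β] (p : α → Prop) [DecidablePred p]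
    {s : Multiset α} {f : α → β} (hf : ∀ x ∈ s, ¬ p x → f x = 1) :
    ((s.filter p).map f).prod = (s.map f).prod := by
  conv_rhs => rw [← filter_add_not p s, map_add, prod_add]
  rw [prod_eq_one (s := (s.filter (fun a => ¬ p a)).map f), mul_one]
  simp only [mem_map, mem_filter]
  rintro _ ⟨x, ⟨hx, hpx⟩, rfl⟩
  exact hf x hx hpx

end Multiset

section Prod

variable {M N : Type*} [CommMonoid M] [CommMonoid N]

lemma Prod.irreducible_iff_of_isUnit_fst {p : M × N} (hp : IsUnit p.1) :
    Irreducible p ↔ Irreducible p.2 := by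
  refine ⟨fun h => ⟨fun hu => h.not_isUnit (Prod.isUnit_iff.2 ⟨hp, hu⟩), fun a b hab => ?_⟩,
    fun h => ⟨fun hu => h.not_isUnit (Prod.isUnit_iff.1 hu).2, fun a b hab => ?_⟩⟩
  · have := h.isUnit_or_isUnit (show p = (p.1, a) * (1, b) by simp [Prod.ext_iff, hab])
    simpa only [Prod.isUnit_iff, hp, isUnit_one, true_and] using this
  · rw [Prod.ext_iff] at hab
    rcases h.isUnit_or_isUnit hab.2 with ha | hb
    · exact Or.inl (Prod.isUnit_iff.2 ⟨isUnit_of_mul_isUnit_left (hab.1 ▸ hp), ha⟩)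
    · exact Or.inr (Prod.isUnit_iff.2 ⟨isUnit_of_mul_isUnit_right (hab.1 ▸ hp), hb⟩)

lemma Prod.irreducible_iff {p : M × N} :
    Irreducible p ↔ (Irreducible p.1 ∧ IsUnit p.2) ∨ (IsUnit p.1 ∧ Irreducible p.2) := by
  have hswap : Irreducible p ↔ Irreducible p.swap :=
    (MulEquiv.irreducible_iff (MulEquiv.prodComm (M := M) (N := N))).symm
  refine ⟨fun h => ?_, ?_⟩
  · rcases h.isUnit_or_isUnit (show p = (p.1, 1) * (1, p.2) by simp) with h₁ | h₂
    · have h₁ : IsUnit p.1 := (Prod.isUnit_iff.1 h₁).1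
      exact Or.inr ⟨h₁, (irreducible_iff_of_isUnit_fst h₁).1 h⟩
    · have h₂ : IsUnit p.2 := (Prod.isUnit_iff.1 h₂).2
      exact Or.inl ⟨(irreducible_iff_of_isUnit_fst (p := p.swap) h₂).1 (hswap.1 h), h₂⟩
  · rintro (⟨h₁, h₂⟩ | ⟨h₁, h₂⟩)
    · exact hswap.2 ((irreducible_iff_of_isUnit_fst (p := p.swap) h₂).2 h₁)
    · exact (irreducible_iff_of_isUnit_fst h₁).2 h₂

lemma Prod.irreducible_iff_of_subsingleton_units [Subsingleton Mˣ] [Subsingleton Nˣ]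
    {p : M × N} :
    Irreducible p ↔ (Irreducible p.1 ∧ p.2 = 1) ∨ (p.1 = 1 ∧ Irreducible p.2) := by
  rw [Prod.irreducible_iff, isUnit_iff_eq_one, isUnit_iff_eq_one]

namespace Associates

noncomputable def prodEquiv : Associates (M × N) ≃* Associates M × Associates N :=
  MulEquiv.ofBijective (F := Associates (M × N) →* Associates M × Associates N)
    { toFun := Quotient.lift (fun p => (Associates.mk p.1, Associates.mk p.2)) fun _ _ h => by
        simp only [Prod.ext_iff, mk_eq_mk_iff_associated]
        exact Prod.associated_iff.1 h
      map_one' := rfl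
      map_mul' := by rintro ⟨a⟩ ⟨b⟩; rfl }
    ⟨by
      rintro ⟨a⟩ ⟨b⟩ h
      change (Associates.mk a.1, Associates.mk a.2) = (Associates.mk b.1, Associates.mk b.2) at h
      simp only [Prod.ext_iff, mk_eq_mk_iff_associated] at h
      exact mk_eq_mk_iff_associated.2 (Prod.associated_iff.2 h),
    by
      rintro ⟨⟨a⟩, ⟨b⟩⟩
      exact ⟨Associates.mk (a, b), rfl⟩⟩

@[simp]
lemma prodEquiv_mk (p : M × N) :
    prodEquiv (Associates.mk p) = (Associates.mk p.1, Associates.mk p.2) := rfl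

end Associates

end Prod

/-- The part of the AAMP structure the argument uses: `L` agrees with a progression of
difference `d` on the window `[A, B]` (the central part `L*`), and the initial and final
parts lie in margins of width `M`. -/
structure IsAAMPWindow (L : Set ℤ) (d M A B : ℤ) : Prop where
  subset_Icc : L ⊆ Set.Icc (A - M) (B + M)
  mem_of_modEq : ∀ x ∈ L, ∀ z, z ≡ x [ZMOD d] → z ∈ Set.Icc A B → z ∈ L

namespace IsAAMPWindow

variable {L : Set ℤ} {d M A B : ℤ}

lemma mono_bound (h : IsAAMPWindow L d M A B) (M' : ℤ) (hM : M ≤ M') :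
    IsAAMPWindow L d M' A B :=
  ⟨h.subset_Icc.trans (Set.Icc_subset_Icc (by linarith) (by linarith)), h.mem_of_modEq⟩

lemma of_dvd (h : IsAAMPWindow L d M A B) (d' : ℤ) (hd : d ∣ d') : IsAAMPWindow L d' M A B :=
  ⟨h.subset_Icc, fun x hx z hz => h.mem_of_modEq x hx z (hz.of_dvd hd)⟩

end IsAAMPWindow

lemma IsAAMP.exists_isAAMPWindow {L : Set ℤ} {d M : ℕ} (h : IsAAMP L d M) :
    ∃ A B : ℤ, IsAAMPWindow L d M A B := by
  obtain ⟨D, y, L', Lstar, L'', m, -, -, -, hm, rfl, hL', hL'', hprog, rfl⟩ := h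
  have hm₀ : 0 ≤ m := hm.2.1
  refine ⟨y, y + m, ?_, ?_⟩
  · rintro _ ⟨w, (hw | ⟨-, hw₀, hwm⟩) | hw, rfl⟩
    · have := hL' hw
      simp only [Set.mem_Icc] at this ⊢
      constructor <;> linarith
    · constructor <;> linarith
    · have := hL'' hw
      simp only [Set.mem_Icc] at this ⊢
      constructor <;> linarith
  · rintro _ ⟨w, hw, rfl⟩ z hz ⟨hyz, hzm⟩
    obtain ⟨u, hu, k, rfl⟩ := hprog w hw
    obtain ⟨j, hj⟩ := hz.dvd
    refine ⟨z - y, Or.inl (Or.inr ⟨⟨u, hu, k - j, by linear_combination -hj⟩, by linarith,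
      by linarith⟩), by ring⟩

lemma SatisfiesSTSL.exists_isAAMPWindow {H : Type*} [CommMonoid H] (h : SatisfiesSTSL H) :
    ∃ M D : ℕ, 0 < D ∧ ∀ a : H, ∃ A B : ℤ,
      IsAAMPWindow ((↑) '' Lengths a) D M A B := by
  obtain ⟨M, Δ, -, hΔ, hL⟩ := h
  refine ⟨M, ∏ d ∈ Δ, d, Finset.prod_pos fun d hd => hΔ d hd, fun a => ?_⟩
  obtain ⟨d, hd, hAAMP⟩ := hL a
  obtain ⟨A, B, hW⟩ := hAAMP.exists_isAAMPWindow
  exact ⟨A, B, hW.of_dvd _ (Int.natCast_dvd_natCast.2 (Finset.dvd_prod_of_mem _ hd))⟩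

lemma Int.exists_modEq_mem_Icc_near {A B R D p q : ℤ} (r : ℤ) (hR : 0 ≤ R) (hD : 0 < D)
    (hp : p ∈ Set.Icc (A - R) (B + R)) (hq : q ∈ Set.Icc (A - R) (B + R))
    (hpq : 2 * R + D ≤ |p - q|) :
    ∃ z, z ≡ r [ZMOD D] ∧ z ∈ Set.Icc A B ∧ |z - p| ≤ R + D := by
  obtain ⟨hpA, hpB⟩ := hp
  obtain ⟨hqA, hqB⟩ := hq
  rcases le_or_gt p q with hle | hlt
  · rw [abs_of_nonpos (by linarith)] at hpq
    have h₀ := Int.emod_nonneg (r - (p + R)) hD.ne'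
    have h₁ := Int.emod_lt_of_pos (r - (p + R)) hD
    refine ⟨p + R + (r - (p + R)) % D, ?_, ⟨by linarith, by linarith⟩,
      abs_le.2 ⟨by linarith, by linarith⟩⟩
    simpa using (Int.mod_modEq (r - (p + R)) D).add_left (p + R)
  · rw [abs_of_pos (by linarith)] at hpq
    have h₀ := Int.emod_nonneg (p - R - r) hD.ne'
    have h₁ := Int.emod_lt_of_pos (p - R - r) hD
    refine ⟨p - R - (p - R - r) % D, ?_, ⟨by linarith, by linarith⟩,
      abs_le.2 ⟨by linarith, by linarith⟩⟩
    simpa using (Int.mod_modEq (p - R - r) D).sub_left (p - R)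

lemma exists_rebalance {L₁ L₂ : Set ℤ} {D M A₁ B₁ A₂ B₂ k₁ l₁ k₂ l₂ : ℤ}
    (hM : 0 ≤ M) (hD : 0 < D) (h₁ : IsAAMPWindow L₁ D M A₁ B₁) (h₂ : IsAAMPWindow L₂ D M A₂ B₂)
    (hk₁ : k₁ ∈ L₁) (hl₁ : l₁ ∈ L₁) (hk₂ : k₂ ∈ L₂) (hl₂ : l₂ ∈ L₂)
    (hkl : k₁ + k₂ ≤ l₁ + l₂) :
    ∃ z ∈ L₁, l₁ + l₂ - z ∈ L₂ ∧ |z - k₁| ≤ 2 * (l₁ + l₂ - (k₁ + k₂)) + 2 * M + D := by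
  set t := l₁ + l₂ - (k₁ + k₂)
  by_cases hnear : |l₁ - k₁| < 2 * (M + t) + D
  · exact ⟨l₁, hl₁, by simpa using hl₂, by linarith⟩
  obtain ⟨hk₁A, hk₁B⟩ := h₁.subset_Icc hk₁
  obtain ⟨hl₁A, hl₁B⟩ := h₁.subset_Icc hl₁
  obtain ⟨hk₂A, hk₂B⟩ := h₂.subset_Icc hk₂
  obtain ⟨hl₂A, hl₂B⟩ := h₂.subset_Icc hl₂
  -- `k₁` and `l₁` lie within `M + t` of the intersection of the two windows, on which
  -- `L₁` and `l₁ + l₂ - L₂` are both `D`-periodic through `l₁`.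
  obtain ⟨z, hz, ⟨hzA, hzB⟩, hzk⟩ := Int.exists_modEq_mem_Icc_near l₁ (by linarith) hD
    (R := M + t) (A := max A₁ (l₁ + l₂ - B₂)) (B := min B₁ (l₁ + l₂ - A₂)) (p := k₁) (q := l₁)
    ⟨by omega, by omega⟩ ⟨by omega, by omega⟩ (by rw [abs_sub_comm]; linarith)
  refine ⟨z, h₁.mem_of_modEq l₁ hl₁ z hz ⟨by omega, by omega⟩,
    h₂.mem_of_modEq l₂ hl₂ _ ?_ ⟨by omega, by omega⟩, by linarith⟩
  simpa using hz.sub_left (l₁ + l₂)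

lemma exists_rebalance_of_lt {S₁ S₂ : Set ℕ} {D M : ℕ} {A₁ B₁ A₂ B₂ : ℤ} (hD : 0 < D)
    (h₁ : IsAAMPWindow ((↑) '' S₁) D M A₁ B₁) (h₂ : IsAAMPWindow ((↑) '' S₂) D M A₂ B₂)
    {k₁ l₁ k₂ l₂ : ℕ} (hk₁ : k₁ ∈ S₁) (hl₁ : l₁ ∈ S₁) (hk₂ : k₂ ∈ S₂) (hl₂ : l₂ ∈ S₂)
    (hkl : k₁ + k₂ < l₁ + l₂) :
    ∃ n₁ ∈ S₁, ∃ n₂ ∈ S₂, n₁ + n₂ = l₁ + l₂ ∧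
      ((n₁ : ℤ) - k₁).natAbs ≤ (2 * M + D + 3) * (l₁ + l₂ - (k₁ + k₂)) ∧
      ((n₂ : ℤ) - k₂).natAbs ≤ (2 * M + D + 3) * (l₁ + l₂ - (k₁ + k₂)) := by
  obtain ⟨_, ⟨n₁, hn₁, rfl⟩, ⟨n₂, hn₂, hn₂_eq⟩, hn₁k₁⟩ :=
    exists_rebalance (by positivity) (by exact_mod_cast hD) h₁ h₂ ⟨k₁, hk₁, rfl⟩
      ⟨l₁, hl₁, rfl⟩ ⟨k₂, hk₂, rfl⟩ ⟨l₂, hl₂, rfl⟩ (by exact_mod_cast hkl.le)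
  set t := l₁ + l₂ - (k₁ + k₂)
  have ht : ((l₁ : ℤ) + l₂ - (k₁ + k₂)) = t := by omega
  -- Since `t ≥ 1`, the additive constant `2M + D` is absorbed into the factor of `t`.
  have habs : ∀ e : ℤ, |e| ≤ 3 * t + 2 * M + D → e.natAbs ≤ (2 * M + D + 3) * t := by
    intro e he
    have : (2 * M + D) * 1 ≤ (2 * M + D) * t := Nat.mul_le_mul_left _ (by omega)
    rw [← Int.ofNat_le, Int.natCast_natAbs]
    push_cast at this ⊢
    linarith
  have hn₂k₂ : (n₂ : ℤ) - k₂ = t - (n₁ - k₁) := by omega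
  refine ⟨n₁, hn₁, n₂, hn₂, by omega, habs _ (by linarith), habs _ ?_⟩
  rw [hn₂k₂]
  linarith [abs_sub (t : ℤ) (n₁ - k₁), Nat.abs_cast (R := ℤ) t]

section Factorizations

variable {H₁ H₂ : Type*} [CommMonoid H₁] [CommMonoid H₂]

open Associates

noncomputable def factorizationProd (x₁ : Multiset (Associates H₁))
    (x₂ : Multiset (Associates H₂)) : Multiset (Associates (H₁ × H₂)) :=
  x₁.map (fun u => (prodEquiv (M := H₁) (N := H₂)).symm (u, 1)) +
    x₂.map (fun v => (prodEquiv (M := H₁) (N := H₂)).symm (1, v))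

lemma card_factorizationProd (x₁ : Multiset (Associates H₁)) (x₂ : Multiset (Associates H₂)) :
    (factorizationProd x₁ x₂).card = x₁.card + x₂.card := by
  simp [factorizationProd]

lemma IsFactorizationOf.factorizationProd {a₁ : H₁} {a₂ : H₂} {x₁ : Multiset (Associates H₁)}
    {x₂ : Multiset (Associates H₂)} (h₁ : IsFactorizationOf x₁ a₁)
    (h₂ : IsFactorizationOf x₂ a₂) :
    IsFactorizationOf (factorizationProd x₁ x₂) (a₁, a₂) := by
  refine ⟨?_, ?_⟩
  · simp only [_root_.factorizationProd, Multiset.mem_add, Multiset.mem_map]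
    rintro _ (⟨u, hu, rfl⟩ | ⟨v, hv, rfl⟩) <;>
      rw [MulEquiv.irreducible_iff, Prod.irreducible_iff_of_subsingleton_units]
    · exact Or.inl ⟨h₁.1 u hu, rfl⟩
    · exact Or.inr ⟨rfl, h₂.1 v hv⟩
  · have e₁ : (x₁.map fun u => (u, (1 : Associates H₂))).prod = (x₁.prod, 1) :=
      (map_multiset_prod (MonoidHom.inl _ (Associates H₂)) x₁).symm
    have e₂ : (x₂.map fun v => ((1 : Associates H₁), v)).prod = (1, x₂.prod) :=
      (map_multiset_prod (MonoidHom.inr (Associates H₁) _) x₂).symm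
    apply prodEquiv.injective
    simp only [_root_.factorizationProd, Multiset.prod_add, map_mul, map_multiset_prod,
      Multiset.map_map, Function.comp_def, MulEquiv.apply_symm_apply, prodEquiv_mk]
    rw [e₁, e₂, h₁.2, h₂.2, Prod.mk_mul_mk, mul_one, one_mul]

lemma factorizationDist_factorizationProd_le [DecidableEq (Associates H₁)]
    [DecidableEq (Associates H₂)] [DecidableEq (Associates (H₁ × H₂))]
    (x₁ y₁ : Multiset (Associates H₁)) (x₂ y₂ : Multiset (Associates H₂)) :
    factorizationDist (factorizationProd x₁ x₂) (factorizationProd y₁ y₂) ≤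
      factorizationDist x₁ y₁ + factorizationDist x₂ y₂ :=
  max_le
    ((Multiset.card_map_add_map_sub_le _ _ _ _ _ _).trans
      (add_le_add (le_max_left _ _) (le_max_left _ _)))
    ((Multiset.card_map_add_map_sub_le _ _ _ _ _ _).trans
      (add_le_add (le_max_right _ _) (le_max_right _ _)))

open scoped Pointwise in
lemma lengths_prod_subset (a₁ : H₁) (a₂ : H₂) :
    Lengths (a₁, a₂) ⊆ Lengths a₁ + Lengths a₂ := by
  classical
  rintro _ ⟨s, ⟨hirr, hprod⟩, rfl⟩
  set s' := s.map prodEquiv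
  have hatoms : ∀ p ∈ s', (Irreducible p.1 ∧ p.2 = 1) ∨ (p.1 = 1 ∧ Irreducible p.2) := by
    simp only [s', Multiset.mem_map]
    rintro _ ⟨q, hq, rfl⟩
    rw [← Prod.irreducible_iff_of_subsingleton_units, MulEquiv.irreducible_iff]
    exact hirr q hq
  have hprod' : s'.prod = (Associates.mk a₁, Associates.mk a₂) := by
    rw [← map_multiset_prod, hprod, prodEquiv_mk]
  have hfst := map_multiset_prod (MonoidHom.fst (Associates H₁) (Associates H₂)) s'
  have hsnd := map_multiset_prod (MonoidHom.snd (Associates H₁) (Associates H₂)) s'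
  rw [hprod'] at hfst hsnd
  refine ⟨_, ⟨(s'.filter (·.2 = 1)).map Prod.fst, ⟨?_, ?_⟩, rfl⟩,
    _, ⟨(s'.filter (¬ ·.2 = 1)).map Prod.snd, ⟨?_, ?_⟩, rfl⟩, ?_⟩
  · simp only [Multiset.mem_map, Multiset.mem_filter]
    rintro _ ⟨p, ⟨hp, hp₂⟩, rfl⟩
    exact ((hatoms p hp).resolve_right fun h => h.2.ne_one hp₂).1
  · rw [Multiset.prod_map_filter_of_forall_not _
      fun p hp hp₂ => ((hatoms p hp).resolve_left fun h => hp₂ h.2).1]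
    exact hfst.symm
  · simp only [Multiset.mem_map, Multiset.mem_filter]
    rintro _ ⟨p, ⟨hp, hp₂⟩, rfl⟩
    exact ((hatoms p hp).resolve_left fun h => hp₂ h.2).2
  · rw [Multiset.prod_map_filter_of_forall_not _ fun p _ hp₂ => not_not.1 hp₂]
    exact hsnd.symm
  · dsimp only
    rw [Multiset.card_map, Multiset.card_map, ← Multiset.card_add, Multiset.filter_add_not,
      Multiset.card_map]

end Factorizations

section WeakSuccDist

variable {H : Type*} [CommMonoid H] [DecidableEq (Associates H)]

lemma weakSuccDistBound_of_forall_lt {N : ℕ}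
    (h : ∀ (a : H) (k l : ℕ), k ∈ Lengths a → l ∈ Lengths a → k < l →
      ∃ x y : Multiset (Associates H), IsFactorizationOf x a ∧ IsFactorizationOf y a ∧
        x.card = k ∧ y.card = l ∧ factorizationDist x y ≤ N * (l - k)) :
    WeakSuccDistBound H N := by
  intro a k l hk hl
  rcases lt_trichotomy k l with hkl | rfl | hlk
  · obtain ⟨x, y, hx, hy, rfl, rfl, hxy⟩ := h a k l hk hl hkl
    refine ⟨x, y, hx, hy, rfl, rfl, ?_⟩
    rwa [show ((y.card : ℤ) - x.card).natAbs = y.card - x.card by omega]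
  · obtain ⟨s, hs, rfl⟩ := hk
    exact ⟨s, s, hs, hs, rfl, rfl, by simp [factorizationDist]⟩
  · obtain ⟨x, y, hx, hy, rfl, rfl, hxy⟩ := h a l k hl hk hlk
    refine ⟨y, x, hy, hx, rfl, rfl, ?_⟩
    rwa [factorizationDist_comm, show ((x.card : ℤ) - y.card).natAbs = y.card - x.card by omega]

end WeakSuccDist

theorem weakSuccDist_finite_of_prod_general {H₁ H₂ : Type*} [CommMonoid H₁] [CommMonoid H₂]
    [DecidableEq (Associates H₁)] [DecidableEq (Associates H₂)]
    [DecidableEq (Associates (H₁ × H₂))]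
    (hSTSL₁ : SatisfiesSTSL H₁) (hSTSL₂ : SatisfiesSTSL H₂)
    (hδ₁ : ∃ N₁ : ℕ, WeakSuccDistBound H₁ N₁)
    (hδ₂ : ∃ N₂ : ℕ, WeakSuccDistBound H₂ N₂) :
    ∃ C : ℕ, WeakSuccDistBound (H₁ × H₂) C := by
  obtain ⟨N₁, hN₁⟩ := hδ₁
  obtain ⟨N₂, hN₂⟩ := hδ₂
  obtain ⟨M₁, D₁, hD₁, hW₁⟩ := hSTSL₁.exists_isAAMPWindow
  obtain ⟨M₂, D₂, hD₂, hW₂⟩ := hSTSL₂.exists_isAAMPWindow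
  set C := 2 * (M₁ + M₂) + D₁ * D₂ + 3
  refine ⟨(N₁ + N₂) * C, weakSuccDistBound_of_forall_lt ?_⟩
  rintro ⟨a₁, a₂⟩ _ _ hk hl hkl
  obtain ⟨k₁, hk₁, k₂, hk₂, rfl⟩ := lengths_prod_subset a₁ a₂ hk
  obtain ⟨l₁, hl₁, l₂, hl₂, rfl⟩ := lengths_prod_subset a₁ a₂ hl
  obtain ⟨A₁, B₁, hA₁⟩ := hW₁ a₁
  obtain ⟨A₂, B₂, hA₂⟩ := hW₂ a₂
  obtain ⟨n₁, hn₁, n₂, hn₂, hsum, hdev₁, hdev₂⟩ := exists_rebalance_of_lt (by positivity)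
    ((hA₁.of_dvd (D₁ * D₂ : ℕ) (by push_cast; exact dvd_mul_right _ _)).mono_bound
      (M₁ + M₂ : ℕ) (by push_cast; omega))
    ((hA₂.of_dvd (D₁ * D₂ : ℕ) (by push_cast; exact dvd_mul_left _ _)).mono_bound
      (M₁ + M₂ : ℕ) (by push_cast; omega))
    hk₁ hl₁ hk₂ hl₂ hkl
  obtain ⟨x₁, y₁, hx₁, hy₁, rfl, rfl, hxy₁⟩ := hN₁ a₁ k₁ n₁ hk₁ hn₁
  obtain ⟨x₂, y₂, hx₂, hy₂, rfl, rfl, hxy₂⟩ := hN₂ a₂ k₂ n₂ hk₂ hn₂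
  refine ⟨_, _, hx₁.factorizationProd hx₂, hy₁.factorizationProd hy₂,
    card_factorizationProd _ _, by rw [card_factorizationProd, hsum], ?_⟩
  calc _ ≤ factorizationDist x₁ y₁ + factorizationDist x₂ y₂ :=
        factorizationDist_factorizationProd_le _ _ _ _
    _ ≤ N₁ * (C * _) + N₂ * (C * _) :=
        add_le_add (hxy₁.trans (Nat.mul_le_mul_left _ hdev₁))
          (hxy₂.trans (Nat.mul_le_mul_left _ hdev₂))
    _ = (N₁ + N₂) * C * _ := by ring

/-- Let `H₁` and `H₂` be atomic commutative unit-cancellative monoids, each satisfying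
the Structure Theorem for Sets of Lengths and having finite weak successive distance.
Then the direct product `H₁ × H₂` has finite weak successive distance. -/
theorem weakSuccDist_finite_of_prod {H₁ H₂ : Type*} [CommMonoid H₁] [CommMonoid H₂]
    [DecidableEq (Associates H₁)] [DecidableEq (Associates H₂)]
    [DecidableEq (Associates (H₁ × H₂))]
    (hUC₁ : ∀ a u : H₁, a * u = a → IsUnit u)
    (hUC₂ : ∀ a u : H₂, a * u = a → IsUnit u)
    (hAtomic₁ : ∀ a : H₁, ¬ IsUnit a →
      ∃ s : Multiset (Associates H₁), IsFactorizationOf s a)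
    (hAtomic₂ : ∀ a : H₂, ¬ IsUnit a →
      ∃ s : Multiset (Associates H₂), IsFactorizationOf s a)
    (hSTSL₁ : SatisfiesSTSL H₁) (hSTSL₂ : SatisfiesSTSL H₂)
    (hδ₁ : ∃ N₁ : ℕ, WeakSuccDistBound H₁ N₁)
    (hδ₂ : ∃ N₂ : ℕ, WeakSuccDistBound H₂ N₂) :
    ∃ C : ℕ, WeakSuccDistBound (H₁ × H₂) C :=
  weakSuccDist_finite_of_prod_general hSTSL₁ hSTSL₂ hδ₁ hδ₂
end
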